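/- arXiv:1804.06211 — 8 statements merged into one kernel-verified Lean document; each statement's English description precedes it below -/
import Mathlib

section
/- Let e_1 = (1,0,…,0) ∈ ℂ^{d+1}. All entries of the matrix Φ(e_1) vanish except those in the subdiagonal positions (j+1, j) for 1 ≤ j ≤ E, whose values are c_{j+1,j} = ∏_{k=1}^{j−1}(E−k), and these values are all nonzero. Consequently Φ(e_1) has rank E = (m−1)d. -/
open Finset Matrix

/-- The `(E+1) × (md-1)` matrix of linear forms `Φ(y)`, with entries
`c_{i,j} · y_{j-i+2}` (1-based indices) when `1 ≤ j-i+2 ≤ d+1`, and `0` otherwise. -/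
noncomputable def Phi (d m : ℕ) (c : ℕ → ℕ → ℤ) (y : Fin (d + 1) → ℂ) :
    Matrix (Fin ((m - 1) * d + 1)) (Fin (m * d - 1)) ℂ :=
  fun i j =>
    if h : i.1 ≤ j.1 + 1 ∧ j.1 + 1 ≤ i.1 + d then
      (c (i.1 + 1) (j.1 + 1) : ℂ) * y ⟨j.1 + 1 - i.1, by omega⟩
    else 0

/-- The subdiagonal coefficients are given by the explicit product formula. -/
lemma c_subdiag (d m : ℕ) (c : ℕ → ℕ → ℤ) (h21 : c 2 1 = 1)
    (hrec3 : ∀ j, 2 ≤ j → j ≤ m * d - 1 →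
      c (j + 1) j = ((((m - 1) * d : ℕ) : ℤ) - j + 1) * c j (j - 1)) :
    ∀ j, 1 ≤ j → j ≤ m * d - 1 →
      c (j + 1) j = ∏ k ∈ Finset.Icc 1 (j - 1), ((((m - 1) * d : ℕ) : ℤ) - k) := by
  intro j hj
  induction j, hj using Nat.le_induction with
  | base => intro _; simpa using h21
  | succ n hn ih =>
    intro hle
    have hih := ih (by omega)
    have h3 := hrec3 (n + 1) (by omega) hle
    simp only [Nat.add_sub_cancel] at h3
    rw [h3, hih]
    have hn1 : n - 1 + 1 = n := by omega
    rw [Nat.add_sub_cancel, ← hn1, Finset.prod_Icc_succ_top (by omega), hn1, mul_comm]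
    congr 1
    push_cast
    ring

/-- All entries of `Φ(e₁)` vanish except the subdiagonal entries `(j+1, j)` (1-based),
whose values are `∏_{k=1}^{j-1} (E - k) ≠ 0`; consequently `Φ(e₁)` has rank `E = (m-1)d`. -/
theorem Phi_at_first_basis_vector (d m : ℕ) (hd : 2 ≤ d) (hm : 2 ≤ m)
    (c : ℕ → ℕ → ℤ)
    (hzero : ∀ i j, 1 ≤ j → j ≤ m * d - 1 → (i = 0 ∨ j + 1 < i) → c i j = 0)
    (h11 : c 1 1 = -1) (h21 : c 2 1 = 1)
    (hrec1 : ∀ j, 2 ≤ j → j ≤ m * d - 1 →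
      c 1 j = ((d : ℤ) - j + 1) * c 1 (j - 1))
    (hrec2 : ∀ j, 2 ≤ j → j ≤ m * d - 1 → ∀ i, 2 ≤ i → i ≤ j →
      c i j = ((d : ℤ) - j + i) * c i (j - 1)
        + ((((m - 1) * d : ℕ) : ℤ) - i + 2) * c (i - 1) (j - 1))
    (hrec3 : ∀ j, 2 ≤ j → j ≤ m * d - 1 →
      c (j + 1) j = ((((m - 1) * d : ℕ) : ℤ) - j + 1) * c j (j - 1))
    (e₁ : Fin (d + 1) → ℂ) (he₁ : e₁ = fun a => if a.1 = 0 then 1 else 0) :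
    (∀ (i : Fin ((m - 1) * d + 1)) (j : Fin (m * d - 1)),
      ((i.1 : ℕ) + 1 ≠ (j.1 + 1) + 1 → Phi d m c e₁ i j = 0) ∧
      ((i.1 : ℕ) + 1 = (j.1 + 1) + 1 →
        Phi d m c e₁ i j
            = ((∏ k ∈ Finset.Icc 1 ((j.1 + 1) - 1), ((((m - 1) * d : ℕ) : ℤ) - k) : ℤ) : ℂ) ∧
        Phi d m c e₁ i j ≠ 0)) ∧
    (Phi d m c e₁).rank = (m - 1) * d := by
  set E := (m - 1) * d with hEdef
  have hEd : E + d = m * d := by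
    have h1 : (m - 1) * d + d = ((m - 1) + 1) * d := by ring
    rw [hEdef, h1]
    congr 1
    omega
  have hdmd : d ≤ m * d := by omega
  have hE2 : 2 ≤ E := by nlinarith [Nat.le_of_lt_succ (Nat.lt_succ_of_le hm)]
  -- the entrywise statement
  have key : ∀ (i : Fin (E + 1)) (j : Fin (m * d - 1)),
      ((i.1 : ℕ) + 1 ≠ (j.1 + 1) + 1 → Phi d m c e₁ i j = 0) ∧
      ((i.1 : ℕ) + 1 = (j.1 + 1) + 1 →
        Phi d m c e₁ i j
            = ((∏ k ∈ Finset.Icc 1 ((j.1 + 1) - 1), (((E : ℕ) : ℤ) - k) : ℤ) : ℂ) ∧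
        Phi d m c e₁ i j ≠ 0) := by
    intro i j
    constructor
    · intro hne
      unfold Phi
      split
      · rename_i h
        have : j.1 + 1 - i.1 ≠ 0 := by omega
        rw [he₁]
        simp [this]
      · rfl
    · intro heq
      have hij : i.1 = j.1 + 1 := by omega
      have hcond : i.1 ≤ j.1 + 1 ∧ j.1 + 1 ≤ i.1 + d := by omega
      have hval : Phi d m c e₁ i j = (c (j.1 + 2) (j.1 + 1) : ℂ) := by
        unfold Phi
        rw [dif_pos hcond, he₁]
        have h0 : j.1 + 1 - i.1 = 0 := by omega
        simp [h0, hij]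
      have hj1 : j.1 + 1 ≤ m * d - 1 := by omega
      have hcs := c_subdiag d m c h21 hrec3 (j.1 + 1) (by omega) hj1
      have hj2 : j.1 + 2 = (j.1 + 1) + 1 := by ring
      have hprodpos : 0 < ∏ k ∈ Finset.Icc 1 ((j.1 + 1) - 1), (((E : ℕ) : ℤ) - k) := by
        apply Finset.prod_pos
        intro k hk
        simp only [Finset.mem_Icc] at hk
        have : j.1 + 1 ≤ E := by
          have := i.isLt
          omega
        have : (k : ℤ) < (E : ℤ) := by exact_mod_cast (by omega : k < E)
        omega
      refine ⟨by rw [hval, hj2, hcs], ?_⟩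
      rw [hval, hj2, hcs]
      exact_mod_cast hprodpos.ne'
  refine ⟨key, ?_⟩
  -- rank
  set A := Phi d m c e₁ with hA
  -- upper bound: row 0 of A is zero
  have hrow0 : ∀ j, A 0 j = 0 := by
    intro j
    exact (key 0 j).1 (by simp)
  have hupper : A.rank ≤ E := by
    classical
    have hker : LinearMap.range A.mulVecLin ≤
        LinearMap.ker (LinearMap.proj (R := ℂ) (φ := fun _ : Fin (E + 1) => ℂ) 0) := by
      rintro v ⟨x, rfl⟩
      simp only [LinearMap.mem_ker, LinearMap.proj_apply, Matrix.mulVecLin_apply]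
      simp [Matrix.mulVec, dotProduct, hrow0]
    have hsurj : Function.Surjective
        (LinearMap.proj (R := ℂ) (φ := fun _ : Fin (E + 1) => ℂ) 0) :=
      fun r => ⟨fun _ => r, rfl⟩
    have hrk := LinearMap.finrank_range_add_finrank_ker
      (LinearMap.proj (R := ℂ) (φ := fun _ : Fin (E + 1) => ℂ) 0)
    rw [LinearMap.range_eq_top.mpr hsurj, finrank_top,
      Module.finrank_fintype_fun_eq_card, Module.finrank_self, Fintype.card_fin] at hrk
    have hkerrank : Module.finrank ℂ
        (LinearMap.ker (LinearMap.proj (R := ℂ) (φ := fun _ : Fin (E + 1) => ℂ) 0)) = E := by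
      omega
    calc A.rank ≤ Module.finrank ℂ
          (LinearMap.ker (LinearMap.proj (R := ℂ) (φ := fun _ : Fin (E + 1) => ℂ) 0)) :=
        Submodule.finrank_mono hker
      _ = E := hkerrank
  -- lower bound via a diagonal submatrix
  have hlower : E ≤ A.rank := by
    classical
    set f : Fin E → Fin (E + 1) := fun i => ⟨i.1 + 1, by omega⟩ with hf
    set g : Fin E → Fin (m * d - 1) := fun j => ⟨j.1, by omega⟩ with hg
    set w : Fin E → ℂ :=
      fun i => ((∏ k ∈ Finset.Icc 1 i.1, (((E : ℕ) : ℤ) - k) : ℤ) : ℂ) with hw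
    have hB : A.submatrix f g = Matrix.diagonal w := by
      ext i j
      rcases eq_or_ne i j with rfl | hij
      · have := (key (f i) (g i)).2 (by simp [hf, hg])
        simpa [hf, hg, hw, Matrix.diagonal] using this.1
      · have hne : (f i).1 + 1 ≠ ((g j).1 + 1) + 1 := by
          simp only [hf, hg]
          intro h
          exact hij (Fin.ext (by omega))
        have := (key (f i) (g j)).1 hne
        simpa [Matrix.diagonal, hij] using this
    have hwne : ∀ i, w i ≠ 0 := by
      intro i
      have hpos : 0 < ∏ k ∈ Finset.Icc 1 i.1, (((E : ℕ) : ℤ) - k) := by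
        apply Finset.prod_pos
        intro k hk
        simp only [Finset.mem_Icc] at hk
        have hi := i.isLt
        have : (k : ℤ) < (E : ℤ) := by exact_mod_cast (by omega : k < E)
        omega
      simp only [hw]
      exact_mod_cast hpos.ne'
    have hrkB : (A.submatrix f g).rank = E := by
      rw [hB, Matrix.rank_diagonal]
      rw [Fintype.card_congr (Equiv.subtypeUnivEquiv hwne), Fintype.card_fin]
    have hfact : A.submatrix f g =
        ((1 : Matrix (Fin (E + 1)) (Fin (E + 1)) ℂ).submatrix f (Equiv.refl _)) * A *
          ((1 : Matrix (Fin (m * d - 1)) (Fin (m * d - 1)) ℂ).submatrix (Equiv.refl _) g) := by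
      rw [Matrix.one_submatrix_mul f (Equiv.refl _) A,
        Matrix.mul_submatrix_one (Equiv.refl _) g]
      simp
    calc E = (A.submatrix f g).rank := hrkB.symm
      _ ≤ (((1 : Matrix (Fin (E + 1)) (Fin (E + 1)) ℂ).submatrix f (Equiv.refl _)) * A).rank := by
          rw [hfact]; exact Matrix.rank_mul_le_left _ _
      _ ≤ A.rank := Matrix.rank_mul_le_right _ _
  omega
end

section
/- The recurrence defining the coefficients c_{i,j} has the closed-form solution: for 1 ≤ j ≤ md−1, c_{1,j} = −∏_{k=2}^{j}(d−k+1), and for 2 ≤ i ≤ j+1, c_{i,j} = −[∏_{k=1}^{i−2}(E−k)]·[∏_{k=1}^{j−i+1}(d−k+1)]·[C(j−1, i−1)·m − C(j, i−1)], where C(a,b) denotes the binomial coefficient and empty products equal 1. -/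
open Finset

/-- Closed-form solution of the recurrence defining the coefficients `c_{i,j}`:
for `1 ≤ j ≤ md-1`, `c_{1,j} = -∏_{k=2}^{j} (d-k+1)`, and for `2 ≤ i ≤ j+1`,
`c_{i,j} = -[∏_{k=1}^{i-2}(E-k)]·[∏_{k=1}^{j-i+1}(d-k+1)]·[C(j-1,i-1)·m - C(j,i-1)]`. -/
theorem closed_form_coefficients (d m : ℕ) (hd : 2 ≤ d) (hm : 2 ≤ m)
    (c : ℕ → ℕ → ℤ)
    (hzero : ∀ i j, 1 ≤ j → j ≤ m * d - 1 → (i = 0 ∨ j + 1 < i) → c i j = 0)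
    (h11 : c 1 1 = -1) (h21 : c 2 1 = 1)
    (hrec1 : ∀ j, 2 ≤ j → j ≤ m * d - 1 →
      c 1 j = ((d : ℤ) - j + 1) * c 1 (j - 1))
    (hrec2 : ∀ j, 2 ≤ j → j ≤ m * d - 1 → ∀ i, 2 ≤ i → i ≤ j →
      c i j = ((d : ℤ) - j + i) * c i (j - 1)
        + ((((m - 1) * d : ℕ) : ℤ) - i + 2) * c (i - 1) (j - 1))
    (hrec3 : ∀ j, 2 ≤ j → j ≤ m * d - 1 →
      c (j + 1) j = ((((m - 1) * d : ℕ) : ℤ) - j + 1) * c j (j - 1)) :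
    ∀ j, 1 ≤ j → j ≤ m * d - 1 →
      (c 1 j = -∏ k ∈ Finset.Icc 2 j, ((d : ℤ) - k + 1)) ∧
      (∀ i, 2 ≤ i → i ≤ j + 1 →
        c i j = -((∏ k ∈ Finset.Icc 1 (i - 2), ((((m - 1) * d : ℕ) : ℤ) - k))
          * (∏ k ∈ Finset.Icc 1 (j + 1 - i), ((d : ℤ) - k + 1))
          * ((Nat.choose (j - 1) (i - 1) : ℤ) * m - (Nat.choose j (i - 1) : ℤ)))) := by
  intro j hj1
  induction j, hj1 using Nat.le_induction with
  | base =>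
    intro _
    constructor
    · rw [Finset.Icc_eq_empty (by omega)]
      simpa using h11
    · intro i hi2 hi3
      have hi : i = 2 := by omega
      subst hi
      rw [h21]
      norm_num
  | succ j hj ih =>
    intro hb
    obtain ⟨ih1, ih2⟩ := ih (by omega)
    constructor
    · rw [hrec1 (j + 1) (by omega) hb]
      simp only [Nat.add_sub_cancel]
      rw [ih1, Finset.prod_Icc_succ_top (show 2 ≤ j + 1 by omega)]
      push_cast
      ring
    · intro i hi2 hi3
      rcases eq_or_lt_of_le hi3 with hi | hi
      · -- top case: i = j + 2
        subst hi
        obtain ⟨l, rfl⟩ : ∃ l, j = l + 1 := ⟨j - 1, by omega⟩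
        have htop := ih2 (l + 2) (by omega) (by omega)
        rw [show l + 2 - 2 = l by omega, show l + 1 + 1 - (l + 2) = 0 by omega,
          show l + 1 - 1 = l by omega, show l + 2 - 1 = l + 1 by omega,
          Nat.choose_eq_zero_of_lt (show l < l + 1 by omega), Nat.choose_self,
          Finset.Icc_eq_empty (show ¬(1:ℕ) ≤ 0 by omega), Finset.prod_empty] at htop
        rw [hrec3 (l + 1 + 1) (by omega) hb]
        simp only [Nat.add_sub_cancel]
        rw [htop]
        simp only [show l + 1 + 1 + 1 - (l + 1 + 1 + 1) = 0 by omega,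
          show l + 1 + 1 + 1 - 2 = l + 1 by omega,
          show l + 1 + 1 + 1 - 1 = l + 1 + 1 by omega,
          show l + 1 + 1 - 1 = l + 1 by omega]
        rw [Nat.choose_eq_zero_of_lt (show l + 1 < l + 1 + 1 by omega), Nat.choose_self,
          Finset.Icc_eq_empty (show ¬(1:ℕ) ≤ 0 by omega), Finset.prod_empty,
          Finset.prod_Icc_succ_top (show 1 ≤ l + 1 by omega)]
        push_cast
        ring
      · have hi3' : i ≤ j + 1 := by omega
        rcases eq_or_lt_of_le hi2 with hi2e | hi2e
        · -- i = 2
          subst hi2e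
          obtain ⟨l, rfl⟩ : ∃ l, j = l + 1 := ⟨j - 1, by omega⟩
          have hB := ih2 2 le_rfl (by omega)
          rw [show (2:ℕ) - 2 = 0 from rfl, show l + 1 + 1 - 2 = l by omega,
            show l + 1 - 1 = l from rfl, show (2:ℕ) - 1 = 1 from rfl] at hB
          have hr := hrec2 (l + 1 + 1) (by omega) hb 2 le_rfl (by omega)
          rw [show l + 1 + 1 - 1 = l + 1 from rfl, show (2:ℕ) - 1 = 1 from rfl] at hr
          rw [Finset.Icc_eq_empty (show ¬(1:ℕ) ≤ 0 by omega), Finset.prod_empty] at hB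
          rw [hr, hB, ih1]
          rw [show (2:ℕ) - 2 = 0 from rfl, show l + 1 + 1 + 1 - 2 = l + 1 by omega,
            show l + 1 + 1 - 1 = l + 1 from rfl, show (2:ℕ) - 1 = 1 from rfl]
          rw [Finset.Icc_eq_empty (show ¬(1:ℕ) ≤ 0 by omega), Finset.prod_empty,
            Finset.prod_Icc_succ_top (show 1 ≤ l + 1 by omega)]
          have hQ : (∏ k ∈ Finset.Icc 1 l, ((d : ℤ) - k + 1)) * ((d : ℤ) - (l + 1 : ℕ) + 1)
              = (d : ℤ) * ∏ k ∈ Finset.Icc 2 (l + 1), ((d : ℤ) - k + 1) := by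
            rw [← Finset.prod_Icc_succ_top (show 1 ≤ l + 1 by omega)]
            rw [show Finset.Icc 1 (l + 1) = insert 1 (Finset.Icc 2 (l + 1)) by
              ext x; simp; omega]
            rw [Finset.prod_insert (by simp)]
            norm_num
          simp only [Nat.choose_one_right]
          push_cast [Nat.cast_sub (show 1 ≤ m by omega)]
          push_cast at hQ
          linear_combination ((m : ℤ) - 1) * hQ
        · -- 3 ≤ i ≤ j + 1
          obtain ⟨k, rfl⟩ : ∃ k, i = k + 3 := ⟨i - 3, by omega⟩
          obtain ⟨l, rfl⟩ : ∃ l, j = k + 2 + l := ⟨j - (k + 2), by omega⟩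
          have hA := ih2 (k + 3) (by omega) (by omega)
          rw [show k + 3 - 2 = k + 1 from rfl, show k + 2 + l + 1 - (k + 3) = l by omega,
            show k + 2 + l - 1 = k + 1 + l by omega, show k + 3 - 1 = k + 2 from rfl] at hA
          have hB := ih2 (k + 2) (by omega) (by omega)
          rw [show k + 2 - 2 = k from rfl, show k + 2 + l + 1 - (k + 2) = l + 1 by omega,
            show k + 2 + l - 1 = k + 1 + l by omega, show k + 2 - 1 = k + 1 from rfl] at hB
          have hr := hrec2 (k + 2 + l + 1) (by omega) hb (k + 3) (by omega) (by omega)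
          rw [Nat.add_sub_cancel, show k + 3 - 1 = k + 2 from rfl] at hr
          rw [hr, hA, hB]
          rw [show k + 3 - 2 = k + 1 from rfl,
            show k + 2 + l + 1 + 1 - (k + 3) = l + 1 by omega,
            Nat.add_sub_cancel, show k + 3 - 1 = k + 2 from rfl]
          rw [Finset.prod_Icc_succ_top (show 1 ≤ k + 1 by omega)]
          rw [Finset.prod_Icc_succ_top (show 1 ≤ l + 1 by omega)]
          have p1 : Nat.choose (k + 2 + l) (k + 2)
              = Nat.choose (k + 1 + l) (k + 1) + Nat.choose (k + 1 + l) (k + 2) := by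
            rw [show k + 2 + l = k + 1 + l + 1 by omega]
            exact Nat.choose_succ_succ _ _
          have p2 : Nat.choose (k + 2 + l + 1) (k + 2)
              = Nat.choose (k + 2 + l) (k + 1) + Nat.choose (k + 2 + l) (k + 2) :=
            Nat.choose_succ_succ _ _
          push_cast [p1, p2]
          ring
end

section
/- For every j with d+2 ≤ j ≤ md−1 and every i with 1 ≤ i ≤ j−d, the coefficient c_{i,j} vanishes. -/
/-- For `d+2 ≤ j ≤ md-1` and `1 ≤ i ≤ j-d`, the coefficient `c_{i,j}` vanishes. -/
theorem coefficients_vanish (d m : ℕ) (hd : 2 ≤ d) (hm : 2 ≤ m)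
    (c : ℕ → ℕ → ℤ)
    (hzero : ∀ i j, 1 ≤ j → j ≤ m * d - 1 → (i = 0 ∨ j + 1 < i) → c i j = 0)
    (h11 : c 1 1 = -1) (h21 : c 2 1 = 1)
    (hrec1 : ∀ j, 2 ≤ j → j ≤ m * d - 1 →
      c 1 j = ((d : ℤ) - j + 1) * c 1 (j - 1))
    (hrec2 : ∀ j, 2 ≤ j → j ≤ m * d - 1 → ∀ i, 2 ≤ i → i ≤ j →
      c i j = ((d : ℤ) - j + i) * c i (j - 1)
        + ((((m - 1) * d : ℕ) : ℤ) - i + 2) * c (i - 1) (j - 1))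
    (hrec3 : ∀ j, 2 ≤ j → j ≤ m * d - 1 →
      c (j + 1) j = ((((m - 1) * d : ℕ) : ℤ) - j + 1) * c j (j - 1)) :
    ∀ j, d + 2 ≤ j → j ≤ m * d - 1 → ∀ i, 1 ≤ i → i ≤ j - d → c i j = 0 := by
  have hmd : d + 1 ≤ m * d - 1 := by have := Nat.mul_le_mul_right d hm; omega
  have key : ∀ j, d + 1 ≤ j → j ≤ m * d - 1 → ∀ i, 1 ≤ i → i ≤ j - d → c i j = 0 := by
    intro j hj
    induction j, hj using Nat.le_induction with
    | base =>
      intro hjm i hi1 hi2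
      have hi : i = 1 := by omega
      subst hi
      have h := hrec1 (d + 1) (by omega) hjm
      have h0 : ((d : ℤ) - ((d + 1 : ℕ) : ℤ) + 1) = 0 := by push_cast; ring
      rw [h, h0, zero_mul]
    | succ j hj ih =>
      intro hjm i hi1 hi2
      have hjm' : j ≤ m * d - 1 := by omega
      rcases Nat.lt_or_ge i 2 with hi2' | hi2'
      · have hi : i = 1 := by omega
        subst hi
        have h := hrec1 (j + 1) (by omega) hjm
        rw [h]
        have : c 1 (j + 1 - 1) = 0 := by
          have : j + 1 - 1 = j := rfl
          rw [this]
          exact ih hjm' 1 le_rfl (by omega)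
        rw [this, mul_zero]
      · have h := hrec2 (j + 1) (by omega) hjm i hi2' (by omega)
        have hsimp : j + 1 - 1 = j := rfl
        rw [hsimp] at h
        have hprev : c (i - 1) j = 0 := ih hjm' (i - 1) (by omega) (by omega)
        rcases Nat.lt_or_ge i (j + 1 - d) with hlt | hge
        · have hcur : c i j = 0 := ih hjm' i (by omega) (by omega)
          rw [h, hcur, hprev, mul_zero, mul_zero, add_zero]
        · have hieq : i = j + 1 - d := by omega
          have h0 : ((d : ℤ) - ((j + 1 : ℕ) : ℤ) + (i : ℤ)) = 0 := by
            have : (i : ℤ) = (j : ℤ) + 1 - (d : ℤ) := by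
              have hd' : d ≤ j + 1 := by omega
              omega
            rw [this]; push_cast; ring
          rw [h, h0, zero_mul, hprev, mul_zero, add_zero]
  intro j hj hjm i hi1 hi2
  exact key j (by omega) hjm i hi1 hi2
end

section
/- For every j with d+2 ≤ j ≤ md−1 and every i with 1 ≤ i ≤ j+1, the integer ∏_{k=1}^{j−d−1}(E−k) divides the coefficient c_{i,j}. -/
open Finset

/-- For `d+2 ≤ j ≤ md-1` and `1 ≤ i ≤ j+1`, the integer `∏_{k=1}^{j-d-1} (E-k)`
divides the coefficient `c_{i,j}`. -/
theorem product_divides_coefficients (d m : ℕ) (hd : 2 ≤ d) (hm : 2 ≤ m)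
    (c : ℕ → ℕ → ℤ)
    (hzero : ∀ i j, 1 ≤ j → j ≤ m * d - 1 → (i = 0 ∨ j + 1 < i) → c i j = 0)
    (h11 : c 1 1 = -1) (h21 : c 2 1 = 1)
    (hrec1 : ∀ j, 2 ≤ j → j ≤ m * d - 1 →
      c 1 j = ((d : ℤ) - j + 1) * c 1 (j - 1))
    (hrec2 : ∀ j, 2 ≤ j → j ≤ m * d - 1 → ∀ i, 2 ≤ i → i ≤ j →
      c i j = ((d : ℤ) - j + i) * c i (j - 1)
        + ((((m - 1) * d : ℕ) : ℤ) - i + 2) * c (i - 1) (j - 1))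
    (hrec3 : ∀ j, 2 ≤ j → j ≤ m * d - 1 →
      c (j + 1) j = ((((m - 1) * d : ℕ) : ℤ) - j + 1) * c j (j - 1)) :
    ∀ j, d + 2 ≤ j → j ≤ m * d - 1 → ∀ i, 1 ≤ i → i ≤ j + 1 →
      (∏ k ∈ Finset.Icc 1 (j - d - 1), ((((m - 1) * d : ℕ) : ℤ) - k)) ∣ c i j := by
  set E : ℤ := (((m - 1) * d : ℕ) : ℤ) with hE
  -- Claim A: for all valid j and all i, ∏_{k=1}^{i-2} (E - k) divides c i j.
  have lemA : ∀ j, 1 ≤ j → j ≤ m * d - 1 → ∀ i,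
      (∏ k ∈ Finset.Icc 1 (i - 2), (E - (k : ℕ))) ∣ c i j := by
    intro j hj
    induction j, hj using Nat.le_induction with
    | base =>
      intro hle i
      rcases lt_or_ge i 3 with h3 | h3
      · have h0 : i - 2 = 0 := by omega
        rw [h0]
        simp
      · rw [hzero i 1 le_rfl hle (Or.inr (by omega))]
        exact dvd_zero _
    | succ j hj ih =>
      intro hle i
      have hle' : j ≤ m * d - 1 := by omega
      rcases lt_or_ge i 3 with h3 | h3
      · have h0 : i - 2 = 0 := by omega
        rw [h0]
        simp
      · rcases lt_trichotomy i (j + 2) with hij | hij | hij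
        · -- 3 ≤ i ≤ j+1 : use hrec2
          have hr := hrec2 (j + 1) (by omega) hle i (by omega) (by omega)
          simp only [Nat.add_sub_cancel] at hr
          rw [hr]
          obtain ⟨n, rfl⟩ : ∃ n, i = n + 3 := ⟨i - 3, by omega⟩
          have e2 : n + 3 - 2 = n + 1 := by omega
          have e1 : n + 3 - 1 = n + 2 := by omega
          rw [e2, e1]
          apply dvd_add
          · have h1 := ih hle' (n + 3)
            rw [e2] at h1
            exact Dvd.dvd.mul_left h1 _
          · have hsplit : (∏ k ∈ Finset.Icc 1 (n + 1), (E - (k : ℕ)))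
                = (∏ k ∈ Finset.Icc 1 n, (E - (k : ℕ))) * (E - ((n + 1 : ℕ) : ℤ)) :=
              Finset.prod_Icc_succ_top (by omega) _
            have hco : (E - ((n + 3 : ℕ) : ℤ) + 2) = E - ((n + 1 : ℕ) : ℤ) := by
              push_cast; ring
            have hIH : (∏ k ∈ Finset.Icc 1 n, (E - (k : ℕ))) ∣ c (n + 2) j := by
              have h1 := ih hle' (n + 2)
              have e3 : n + 2 - 2 = n := by omega
              rwa [e3] at h1
            rw [hsplit, hco, mul_comm]
            exact mul_dvd_mul dvd_rfl hIH
        · -- i = j+2 : use hrec3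
          obtain ⟨p, rfl⟩ : ∃ p, j = p + 1 := ⟨j - 1, by omega⟩
          subst hij
          have hr := hrec3 (p + 2) (by omega) hle
          have e1 : p + 2 - 1 = p + 1 := by omega
          rw [e1] at hr
          have e0 : p + 2 + 1 = p + 1 + 2 := by omega
          rw [e0] at hr
          rw [hr]
          have e2 : p + 1 + 2 - 2 = p + 1 := by omega
          rw [e2]
          have hsplit : (∏ k ∈ Finset.Icc 1 (p + 1), (E - (k : ℕ)))
              = (∏ k ∈ Finset.Icc 1 p, (E - (k : ℕ))) * (E - ((p + 1 : ℕ) : ℤ)) :=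
            Finset.prod_Icc_succ_top (by omega) _
          have hco : (E - ((p + 2 : ℕ) : ℤ) + 1) = E - ((p + 1 : ℕ) : ℤ) := by
            push_cast; ring
          have hIH : (∏ k ∈ Finset.Icc 1 p, (E - (k : ℕ))) ∣ c (p + 2) (p + 1) := by
            have h1 := ih hle' (p + 2)
            have e3 : p + 2 - 2 = p := by omega
            rwa [e3] at h1
          rw [hsplit, hco, mul_comm]
          exact mul_dvd_mul dvd_rfl hIH
        · -- i > j+2 : zero
          rw [hzero i (j + 1) (by omega) hle (Or.inr (by omega))]
          exact dvd_zero _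
  -- Claim B: for d+1 ≤ j and i ≤ j - d, c i j = 0.
  have lemB : ∀ j, d + 1 ≤ j → j ≤ m * d - 1 → ∀ i, i ≤ j - d → c i j = 0 := by
    intro j hj
    induction j, hj using Nat.le_induction with
    | base =>
      intro hle i hi
      have hi' : i = 0 ∨ i = 1 := by omega
      rcases hi' with rfl | rfl
      · exact hzero 0 (d + 1) (by omega) hle (Or.inl rfl)
      · rw [hrec1 (d + 1) (by omega) hle]
        have h0 : ((d : ℤ) - ((d + 1 : ℕ) : ℤ) + 1) = 0 := by push_cast; ring
        rw [h0, zero_mul]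
    | succ j hj ih =>
      intro hle i hi
      have hle' : j ≤ m * d - 1 := by omega
      rcases Nat.lt_or_ge i 1 with h1 | h1
      · exact hzero i (j + 1) (by omega) hle (Or.inl (by omega))
      rcases Nat.lt_or_ge i 2 with h2 | h2
      · have hi1 : i = 1 := by omega
        subst hi1
        rw [hrec1 (j + 1) (by omega) hle]
        simp only [Nat.add_sub_cancel]
        rw [ih hle' 1 (by omega), mul_zero]
      · have hr := hrec2 (j + 1) (by omega) hle i h2 (by omega)
        simp only [Nat.add_sub_cancel] at hr
        rw [hr]
        rcases Nat.lt_or_ge i (j + 1 - d) with hlt | hge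
        · rw [ih hle' i (by omega), ih hle' (i - 1) (by omega), mul_zero, mul_zero,
            add_zero]
        · have hc0 : ((d : ℤ) - ((j + 1 : ℕ) : ℤ) + (i : ℤ)) = 0 := by
            have hieq : i + d = j + 1 := by omega
            push_cast
            omega
          rw [hc0, zero_mul, ih hle' (i - 1) (by omega), mul_zero, add_zero]
  -- Main proof.
  intro j hj1 hj2 i hi1 hi2
  rcases le_or_gt i (j - d) with h | h
  · rw [lemB j (by omega) hj2 i h]
    exact dvd_zero _
  · have hsub : Finset.Icc 1 (j - d - 1) ⊆ Finset.Icc 1 (i - 2) :=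
      Finset.Icc_subset_Icc_right (by omega)
    exact dvd_trans (Finset.prod_dvd_prod_of_subset _ _ _ hsub) (lemA j (by omega) hj2 i)
end

section
/- Set v^{(j)} := Y^{j−1}(y_1 z_2 − y_2 z_1) for 1 ≤ j ≤ md−1, and set v_low := y_d z_{E+1} − y_{d+1} z_E. Then for each 1 ≤ j ≤ md−1 the polynomial v^{(j)} is nonzero, the polynomial X^{md−1−j}(v_low) is nonzero, and there exists a nonzero scalar λ ∈ ℂ such that X^{md−1−j}(v_low) = λ · v^{(j)}. (This is the symmetry relating the coefficients obtained from the highest weight vector by acting with Y to those obtained from the lowest weight vector by acting with X.) -/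
open MvPolynomial Finset

/-- `y_a = x₁^{d-a+1} x₂^{a-1}` for `1 ≤ a ≤ d+1`, and `0` for other integers `a`.
Variables: `X 0 = x₁`, `X 1 = x₂`, `X 2 = w₁`, `X 3 = w₂`. -/
noncomputable def yv (d : ℕ) (a : ℤ) : MvPolynomial (Fin 4) ℂ :=
  if 1 ≤ a ∧ a ≤ (d : ℤ) + 1 then
    X 0 ^ ((d : ℤ) + 1 - a).toNat * X 1 ^ (a - 1).toNat
  else 0

/-- `z_b = w₁^{E-b+1} w₂^{b-1}` for `1 ≤ b ≤ E+1`, and `0` for other integers `b`. -/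
noncomputable def zv (e : ℕ) (b : ℤ) : MvPolynomial (Fin 4) ℂ :=
  if 1 ≤ b ∧ b ≤ (e : ℤ) + 1 then
    X 2 ^ ((e : ℤ) + 1 - b).toNat * X 3 ^ (b - 1).toNat
  else 0

/-- The derivation `Y = x₂·∂/∂x₁ + w₂·∂/∂w₁` of `ℂ[x₁,x₂,w₁,w₂]`. -/
noncomputable def Yop : MvPolynomial (Fin 4) ℂ → MvPolynomial (Fin 4) ℂ :=
  fun p => X 1 * pderiv 0 p + X 3 * pderiv 2 p

/-- The derivation `X = x₁·∂/∂x₂ + w₁·∂/∂w₂` of `ℂ[x₁,x₂,w₁,w₂]`. -/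
noncomputable def Xop : MvPolynomial (Fin 4) ℂ → MvPolynomial (Fin 4) ℂ :=
  fun p => X 0 * pderiv 1 p + X 2 * pderiv 3 p

/-!
With `a = d - 1`, `b = E - 1` and `U = x₁w₂ - x₂w₁` one has `y₁z₂ - y₂z₁ = U·x₁ᵃw₁ᵇ` and
`v_low = U·x₂ᵃw₂ᵇ`, and `U` is killed by both derivations. On the coefficients of
`P(t) = (x₁ + t x₂)ᵃ (w₁ + t w₂)ᵇ` the derivation `Y` acts as `d/dt`, so `Yᵏ(x₁ᵃw₁ᵇ) = k! [tᵏ] P`.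
Likewise `X` acts as `d/dt` on the reversed polynomial `t^(a+b) P(1/t) = (x₂ + t x₁)ᵃ (w₂ + t w₁)ᵇ`,
so `X^(a+b-k)(x₂ᵃw₂ᵇ) = (a+b-k)! [tᵏ] P`. Finally `[tᵏ] P ≠ 0` for `k ≤ a + b`, since at
`x = w = 1` it becomes `(a+b).choose k`.
-/

namespace Derivation

open Polynomial (derivative coeff_derivative derivative_mul)
open scoped Polynomial Nat

variable {S A : Type*} [CommSemiring S] [CommSemiring A] [Algebra S A]

def ActsAsDerivative (D : Derivation S A A) (P : A[X]) : Prop :=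
  ∀ k, D (P.coeff k) = (derivative P).coeff k

variable {D : Derivation S A A}

theorem ActsAsDerivative.mul {P Q : A[X]} (hP : D.ActsAsDerivative P)
    (hQ : D.ActsAsDerivative Q) : D.ActsAsDerivative (P * Q) := by
  unfold ActsAsDerivative at *
  intro k
  simp only [Polynomial.coeff_mul, map_sum, leibniz, smul_eq_mul, derivative_mul,
    Polynomial.coeff_add, sum_add_distrib, hP, hQ]
  rw [add_comm]
  congr 1
  exact sum_congr rfl fun _ _ => mul_comm _ _

theorem ActsAsDerivative.pow {P : A[X]} (hP : D.ActsAsDerivative P) (n : ℕ) :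
    D.ActsAsDerivative (P ^ n) := by
  induction n with
  | zero => intro k; simp [Polynomial.coeff_one, apply_ite D]
  | succ n ih => rw [pow_succ]; exact ih.mul hP

theorem actsAsDerivative_linear {u v : A} (hu : D u = v) (hv : D v = 0) :
    D.ActsAsDerivative (Polynomial.C v * Polynomial.X + Polynomial.C u) := by
  rintro (_ | _ | k) <;> simp [Polynomial.coeff_C, Polynomial.coeff_X, hu, hv]

theorem ActsAsDerivative.iterate_coeff_zero {P : A[X]} (hP : D.ActsAsDerivative P) (k : ℕ) :
    D^[k] (P.coeff 0) = k ! • P.coeff k := by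
  induction k with
  | zero => simp
  | succ k ih =>
    rw [Function.iterate_succ_apply', ih, map_nsmul, hP, coeff_derivative, Nat.factorial_succ]
    simp only [nsmul_eq_mul]
    push_cast
    ring

theorem iterate_mul_of_apply_eq_zero {U : A} (hU : D U = 0) (k : ℕ) (p : A) :
    D^[k] (U * p) = U * D^[k] p := by
  induction k with
  | zero => rfl
  | succ k ih => simp [Function.iterate_succ_apply', ih, leibniz, hU]

end Derivation

namespace Polynomial

variable {A : Type*} [CommSemiring A]

theorem natDegree_linear_pow_le (u v : A) (n : ℕ) : ((C v * X + C u) ^ n).natDegree ≤ n :=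
  (natDegree_pow_le_of_le n natDegree_linear_le).trans_eq (mul_one n)

theorem reflect_linear_pow (u v : A) (n : ℕ) :
    reflect n ((C v * X + C u) ^ n) = (C u * X + C v) ^ n := by
  induction n with
  | zero => simp
  | succ n ih =>
    rw [pow_succ, reflect_mul _ _ (natDegree_linear_pow_le u v n) natDegree_linear_le, ih,
      pow_succ]
    simp [reflect_add, add_comm]

end Polynomial

open Polynomial (reflect)
open scoped Polynomial Nat

noncomputable def yDer : Derivation ℂ (MvPolynomial (Fin 4) ℂ) (MvPolynomial (Fin 4) ℂ) :=
  (X 1 : MvPolynomial (Fin 4) ℂ) • pderiv 0 + (X 3 : MvPolynomial (Fin 4) ℂ) • pderiv 2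

noncomputable def xDer : Derivation ℂ (MvPolynomial (Fin 4) ℂ) (MvPolynomial (Fin 4) ℂ) :=
  (X 0 : MvPolynomial (Fin 4) ℂ) • pderiv 1 + (X 2 : MvPolynomial (Fin 4) ℂ) • pderiv 3

theorem coe_yDer : ⇑yDer = Yop := by
  ext1 p
  simp [yDer, Yop]

theorem coe_xDer : ⇑xDer = Xop := by
  ext1 p
  simp [xDer, Xop]

noncomputable def detForm : MvPolynomial (Fin 4) ℂ := X 0 * X 3 - X 1 * X 2

theorem yDer_detForm : yDer detForm = 0 := by
  simp [yDer, detForm, pderiv_X]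
  ring

theorem xDer_detForm : xDer detForm = 0 := by
  simp [xDer, detForm, pderiv_X]
  ring

theorem detForm_ne_zero : detForm ≠ 0 := by
  intro h
  simpa [detForm] using congrArg (eval ![1, 0, 0, 1]) h

theorem yv_zv_highest_eq (a b : ℕ) :
    yv (a + 1) 1 * zv (b + 1) 2 - yv (a + 1) 2 * zv (b + 1) 1 = detForm * (X 0 ^ a * X 2 ^ b) := by
  simp (disch := omega) only [yv, zv, if_pos]
  push_cast
  simp [detForm, show ∀ n : ℤ, n + 1 + 1 - 2 = n by intro; ring]
  ring

theorem yv_zv_lowest_eq (a b : ℕ) :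
    yv (a + 1) ((a + 1 : ℕ) : ℤ) * zv (b + 1) (((b + 1 : ℕ) : ℤ) + 1)
      - yv (a + 1) (((a + 1 : ℕ) : ℤ) + 1) * zv (b + 1) ((b + 1 : ℕ) : ℤ)
      = detForm * (X 1 ^ a * X 3 ^ b) := by
  simp (disch := omega) only [yv, zv, if_pos]
  push_cast
  simp [detForm]
  ring

/-- `(x₁ + t x₂)ᵃ (w₁ + t w₂)ᵇ = exp(tY) (x₁ᵃ w₁ᵇ)`. -/
noncomputable def highestOrbit (a b : ℕ) : (MvPolynomial (Fin 4) ℂ)[X] :=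
  (Polynomial.C (X 1) * Polynomial.X + Polynomial.C (X 0)) ^ a
    * (Polynomial.C (X 3) * Polynomial.X + Polynomial.C (X 2)) ^ b

theorem reflect_highestOrbit (a b : ℕ) :
    reflect (a + b) (highestOrbit a b)
      = (Polynomial.C (X 0) * Polynomial.X + Polynomial.C (X 1)) ^ a
        * (Polynomial.C (X 2) * Polynomial.X + Polynomial.C (X 3)) ^ b := by
  rw [highestOrbit, Polynomial.reflect_mul _ _ (Polynomial.natDegree_linear_pow_le _ _ a)
      (Polynomial.natDegree_linear_pow_le _ _ b),
    Polynomial.reflect_linear_pow, Polynomial.reflect_linear_pow]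

theorem yDer_actsAsDerivative_highestOrbit (a b : ℕ) :
    yDer.ActsAsDerivative (highestOrbit a b) := by
  have hlin (i j : Fin 4) (hij : yDer (X i) = X j) (hj : yDer (X j) = 0) :=
    Derivation.actsAsDerivative_linear hij hj
  exact ((hlin 0 1 (by simp [yDer]) (by simp [yDer])).pow a).mul
    ((hlin 2 3 (by simp [yDer]) (by simp [yDer])).pow b)

theorem xDer_actsAsDerivative_reflect_highestOrbit (a b : ℕ) :
    xDer.ActsAsDerivative (reflect (a + b) (highestOrbit a b)) := by
  have hlin (i j : Fin 4) (hij : xDer (X i) = X j) (hj : xDer (X j) = 0) :=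
    Derivation.actsAsDerivative_linear hij hj
  rw [reflect_highestOrbit]
  exact ((hlin 1 0 (by simp [xDer]) (by simp [xDer])).pow a).mul
    ((hlin 3 2 (by simp [xDer]) (by simp [xDer])).pow b)

theorem coeff_highestOrbit_ne_zero {a b k : ℕ} (hk : k ≤ a + b) :
    (highestOrbit a b).coeff k ≠ 0 := by
  have hone : (highestOrbit a b).map (eval 1) = (Polynomial.X + 1) ^ (a + b) := by
    simp [highestOrbit, pow_add]
  intro h
  have := congrArg (Polynomial.coeff · k) hone
  rw [Polynomial.coeff_map, h, map_zero, Polynomial.coeff_X_add_one_pow] at this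
  exact (Nat.choose_pos hk).ne' (mod_cast this.symm)

theorem iterate_Yop_highest (a b k : ℕ) :
    Yop^[k] (yv (a + 1) 1 * zv (b + 1) 2 - yv (a + 1) 2 * zv (b + 1) 1)
      = k ! • (detForm * (highestOrbit a b).coeff k) := by
  have h0 : (highestOrbit a b).coeff 0 = X 0 ^ a * X 2 ^ b := by
    simp [highestOrbit, Polynomial.coeff_zero_eq_eval_zero]
  rw [yv_zv_highest_eq, ← h0, ← coe_yDer,
    Derivation.iterate_mul_of_apply_eq_zero yDer_detForm,
    (yDer_actsAsDerivative_highestOrbit a b).iterate_coeff_zero, mul_smul_comm]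

theorem iterate_Xop_lowest {a b k : ℕ} (hk : k ≤ a + b) :
    Xop^[a + b - k]
      (yv (a + 1) ((a + 1 : ℕ) : ℤ) * zv (b + 1) (((b + 1 : ℕ) : ℤ) + 1)
        - yv (a + 1) (((a + 1 : ℕ) : ℤ) + 1) * zv (b + 1) ((b + 1 : ℕ) : ℤ))
      = (a + b - k) ! • (detForm * (highestOrbit a b).coeff k) := by
  have h0 : (reflect (a + b) (highestOrbit a b)).coeff 0 = X 1 ^ a * X 3 ^ b := by
    simp [reflect_highestOrbit, Polynomial.coeff_zero_eq_eval_zero]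
  rw [yv_zv_lowest_eq, ← h0, ← coe_xDer,
    Derivation.iterate_mul_of_apply_eq_zero xDer_detForm,
    (xDer_actsAsDerivative_reflect_highestOrbit a b).iterate_coeff_zero, mul_smul_comm,
    Polynomial.coeff_reflect, Polynomial.revAt_le (Nat.sub_le _ _), Nat.sub_sub_self hk]

/-- With `v⁽ʲ⁾ = Y^{j-1}(y₁z₂ - y₂z₁)` and `v_low = y_d z_{E+1} - y_{d+1} z_E`:
for each `1 ≤ j ≤ md-1`, both `v⁽ʲ⁾` and `X^{md-1-j}(v_low)` are nonzero, and they
agree up to a nonzero scalar. -/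
theorem lowest_weight_symmetry (d m : ℕ) (hd : 2 ≤ d) (hm : 2 ≤ m) :
    ∀ j : ℕ, 1 ≤ j → j ≤ m * d - 1 →
      Yop^[j - 1] (yv d 1 * zv ((m - 1) * d) 2 - yv d 2 * zv ((m - 1) * d) 1) ≠ 0 ∧
      Xop^[m * d - 1 - j]
        (yv d (d : ℤ) * zv ((m - 1) * d) (((m - 1) * d : ℕ) + 1)
          - yv d ((d : ℤ) + 1) * zv ((m - 1) * d) (((m - 1) * d : ℕ) : ℤ)) ≠ 0 ∧
      ∃ lam : ℂ, lam ≠ 0 ∧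
        Xop^[m * d - 1 - j]
          (yv d (d : ℤ) * zv ((m - 1) * d) (((m - 1) * d : ℕ) + 1)
            - yv d ((d : ℤ) + 1) * zv ((m - 1) * d) (((m - 1) * d : ℕ) : ℤ))
        = lam • Yop^[j - 1]
            (yv d 1 * zv ((m - 1) * d) 2 - yv d 2 * zv ((m - 1) * d) 1) := by
  intro j hj1 hj2
  obtain ⟨a, rfl⟩ : ∃ a, d = a + 1 := ⟨d - 1, by omega⟩
  obtain ⟨n, rfl⟩ : ∃ n, m = n + 1 := ⟨m - 1, by omega⟩
  obtain ⟨b, hb⟩ : ∃ b, n * (a + 1) = b + 1 :=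
    ⟨_, (Nat.sub_add_cancel (Nat.mul_pos (by omega) (by omega))).symm⟩
  have hmd : (n + 1) * (a + 1) = a + b + 2 := by rw [add_one_mul, hb]; ring
  have hk : j - 1 ≤ a + b := by omega
  rw [Nat.add_sub_cancel, hb, hmd, show a + b + 2 - 1 - j = a + b - (j - 1) by omega,
    iterate_Yop_highest, iterate_Xop_lowest hk]
  have hv := mul_ne_zero detForm_ne_zero (coeff_highestOrbit_ne_zero hk)
  refine ⟨smul_ne_zero (Nat.factorial_ne_zero _) hv, smul_ne_zero (Nat.factorial_ne_zero _) hv,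
    ((a + b - (j - 1))! / (j - 1)! : ℂ), div_ne_zero (mod_cast Nat.factorial_ne_zero _)
      (mod_cast Nat.factorial_ne_zero _), ?_⟩
  rw [← Nat.cast_smul_eq_nsmul ℂ, ← Nat.cast_smul_eq_nsmul ℂ, smul_smul,
    div_mul_cancel₀ _ (mod_cast Nat.factorial_ne_zero _)]
end

section
/- If p ∈ R = ℂ[y_1,…,y_{d+1}] is homogeneous of degree m, every monomial in the support of p has weight md−2, and E(p) = 0, then p = 0. (Under the identification of R with the symmetric algebra on the space of binary forms of degree d, E is the raising operator of 𝔰𝔩_2(ℂ), and the statement encodes that the irreducible SL_2(ℂ)-representation V_{md−2} does not occur in S^m V_d, i.e. Hom(V_{md−2}, S^m V_d)^{SL_2(ℂ)} = 0.) -/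
open MvPolynomial Finset

/-- The derivation `E` of `ℂ[y₁,…,y_{d+1}]` (variables indexed by `Fin (d+1)`, so that
`y_k` corresponds to `X ⟨k-1⟩`) determined by `E(y₁) = 0` and `E(y_k) = (k-1)·y_{k-1}`
for `2 ≤ k ≤ d+1`. -/
noncomputable def Eop (d : ℕ) : MvPolynomial (Fin (d + 1)) ℂ → MvPolynomial (Fin (d + 1)) ℂ :=
  fun p => ∑ k : Fin (d + 1), (k.1 : ℂ) • (X (k - 1) * pderiv k p)

/-- If `p` is homogeneous of degree `m`, every monomial in its support has weight `md-2`
(the weight of `y₁^{h₁}⋯y_{d+1}^{h_{d+1}}` being `∑ h_k (d - 2(k-1))`), and `E(p) = 0`,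
then `p = 0`: the representation `V_{md-2}` does not occur in `SᵐV_d`. -/
theorem weight_md_sub_two_killed_by_E_is_zero (d m : ℕ) (hd : 2 ≤ d) (hm : 2 ≤ m)
    (p : MvPolynomial (Fin (d + 1)) ℂ)
    (hp : p.IsHomogeneous m)
    (hw : ∀ μ ∈ p.support,
      (∑ k : Fin (d + 1), (μ k : ℤ) * ((d : ℤ) - 2 * (k.1 : ℤ)))
        = (m : ℤ) * d - 2)
    (hE : Eop d p = 0) :
    p = 0 := by
  have h1lt : (1 : ℕ) < d + 1 := by omega
  have hval1 : ((1 : Fin (d+1)) : ℕ) = 1 := by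
    simp [Fin.val_one', Nat.mod_eq_of_lt h1lt]
  have hdne : d ≠ 0 := by omega
  have h01 : (0 : Fin (d+1)) ≠ 1 := by
    intro h
    have := congrArg Fin.val h
    rw [Fin.val_zero, hval1] at this
    omega
  set μ₀ : Fin (d+1) →₀ ℕ := Finsupp.single 0 (m-1) + Finsupp.single 1 1 with hμ₀
  have key : ∀ μ ∈ p.support, μ = μ₀ := by
    intro μ hμ
    have hdeg : ∑ k, μ k = m := by
      have h := hp (mem_support_iff.mp hμ)
      rw [Finsupp.weight_apply] at h
      rw [Finsupp.sum_fintype] at h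
      · simpa using h
      · intro i; simp
    have hdegZ : (∑ k, (μ k : ℤ)) = (m : ℤ) := by exact_mod_cast hdeg
    have hwμ := hw μ hμ
    have e1 : ∑ k : Fin (d+1), (μ k : ℤ) * ((d : ℤ) - 2 * (k.1 : ℤ))
        = (d : ℤ) * (∑ k, (μ k : ℤ)) - 2 * ∑ k, (μ k : ℤ) * (k.1 : ℤ) := by
      rw [Finset.mul_sum, Finset.mul_sum, ← Finset.sum_sub_distrib]
      exact Finset.sum_congr rfl (fun k _ => by ring)
    have hsumZ : ∑ k, (μ k : ℤ) * (k.1 : ℤ) = 1 := by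
      rw [e1, hdegZ] at hwμ; linarith
    have hsum : ∑ k, μ k * k.1 = 1 := by exact_mod_cast hsumZ
    have hle : ∀ k : Fin (d+1), μ k * k.1 ≤ 1 := by
      intro k
      have h := Finset.single_le_sum (f := fun k : Fin (d+1) => μ k * k.1)
        (fun _ _ => Nat.zero_le _) (mem_univ k)
      beta_reduce at h
      omega
    have hzero : ∀ k : Fin (d+1), k ≠ 0 → k ≠ 1 → μ k = 0 := by
      intro k hk0 hk1
      have hk0' : (k : ℕ) ≠ 0 := fun h => hk0 (Fin.ext (by simp [h]))
      have hk1' : (k : ℕ) ≠ 1 := fun h => hk1 (Fin.ext (by rw [h, hval1]))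
      have h2 : 2 ≤ (k : ℕ) := by omega
      have := hle k
      nlinarith [Nat.zero_le (μ k)]
    have hμ1 : μ 1 = 1 := by
      by_contra h
      have h0 : μ 1 = 0 := by
        have := hle 1; rw [hval1] at this; omega
      have : ∑ k, μ k * k.1 = 0 := by
        apply Finset.sum_eq_zero
        intro k _
        by_cases hk0 : k = 0
        · simp [hk0]
        by_cases hk1 : k = 1
        · simp [hk1, h0]
        · simp [hzero k hk0 hk1]
      omega
    have hμ0 : μ 0 = m - 1 := by
      have hsplit : ∑ k, μ k = μ 0 + (μ 1 + ∑ k ∈ (univ.erase 0).erase 1, μ k) := by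
        rw [← Finset.add_sum_erase _ _ (mem_univ 0),
          ← Finset.add_sum_erase _ _ (Finset.mem_erase.mpr ⟨Ne.symm h01, mem_univ 1⟩)]
      have hrest : ∑ k ∈ (univ.erase 0).erase 1, μ k = 0 := by
        apply Finset.sum_eq_zero
        intro k hk
        simp only [Finset.mem_erase] at hk
        exact hzero k hk.2.1 hk.1
      rw [hsplit, hμ1, hrest] at hdeg
      omega
    ext k
    by_cases hk0 : k = 0
    · simp [hk0, hμ₀, hμ0, Finsupp.single_apply, Ne.symm h01, hdne]
    by_cases hk1 : k = 1
    · simp [hk1, hμ1, hμ₀, Finsupp.single_apply, h01, hdne]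
    · simp [hzero k hk0 hk1, hμ₀, Finsupp.single_apply, Ne.symm hk0, Ne.symm hk1, hdne]
  set c : ℂ := coeff μ₀ p with hc
  have hps : p = monomial μ₀ c := by
    ext ν
    rw [coeff_monomial]
    split_ifs with h
    · rw [← h]
    · by_contra h'
      exact h ((key ν (mem_support_iff.mpr h')).symm)
  have hμ₀1 : μ₀ 1 = 1 := by
    simp [hμ₀, Finsupp.single_apply, h01, hdne]
  have hμ₀sub : μ₀ - Finsupp.single 1 1 = Finsupp.single 0 (m-1) := by
    rw [hμ₀]; exact add_tsub_cancel_right _ _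
  have hcz : c = 0 := by
    have h0 := hE
    rw [hps] at h0
    unfold Eop at h0
    rw [Finset.sum_eq_single (1 : Fin (d+1))] at h0
    · rw [hval1, sub_self] at h0
      rw [pderiv_monomial, hμ₀1, hμ₀sub] at h0
      simp only [Nat.cast_one, mul_one, one_smul, X, monomial_mul, one_mul] at h0
      rw [monomial_eq_zero] at h0
      exact h0
    · intro k _ hk1
      by_cases hk0 : k = 0
      · simp [hk0]
      · have : μ₀ k = 0 := by
          simp [hμ₀, Finsupp.single_apply, Ne.symm hk0, Ne.symm hk1]
        rw [pderiv_monomial, this]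
        simp
    · intro h; exact absurd (mem_univ _) h
  rw [hps, hcz, monomial_zero]
end

section
/- If p ∈ R is homogeneous of total degree m, every monomial in the support of p has weight (md−1, 1, 0, …, 0) ∈ ℕ^{n+1}, and E_{12}(p) = 0, then p = 0. (This encodes that the irreducible SL_{n+1}(ℂ)-representation of highest weight (md−2)λ_1 + λ_2 does not occur in S^m V_d, i.e. Hom(V_{(md−2)λ_1+λ_2}, S^m V_d)^{SL_{n+1}(ℂ)} = 0.) -/
/-!
Write `a = d e₁` and `b = (d-1) e₁ + e₂`. A monomial of weight `(md-1, 1, 0, …, 0)` only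
involves variables `y_k` with `k` supported on the first two coordinates and `k₂ ≤ 1`, i.e.
`y_a` and `y_b`, and the second coordinate of the weight says that `y_b` occurs exactly once.
So it is `y_a^j y_b`, whose first weight coordinate `jd + d - 1` determines `j`: the weight
space is spanned by a single monomial, `p = c y_a^j y_b`, and `E₁₂ p = c y_a^(j+1)` forces `c = 0`.
-/

open MvPolynomial Finset

theorem Finsupp.eq_single_add_single_of_support_subset {α M : Type*} [DecidableEq α]
    [AddZeroClass M] {f : α →₀ M} {a b : α} (hab : a ≠ b) (h : f.support ⊆ {a, b}) :
    f = single a (f a) + single b (f b) := by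
  ext k
  rcases eq_or_ne k a with rfl | hka
  · simp [hab]
  rcases eq_or_ne k b with rfl | hkb
  · simp [hab.symm]
  have : k ∉ f.support := fun hk => by simpa [hka, hkb] using h hk
  simp [Finsupp.notMem_support_iff.mp this, hka.symm, hkb.symm]

theorem Derivation.apply_monomial_single_add_single {σ R : Type*} [CommRing R]
    (D : Derivation R (MvPolynomial σ R) (MvPolynomial σ R)) {a b : σ}
    (ha : D (X a) = 0) (hb : D (X b) = X a) (j : ℕ) (c : R) :
    D (monomial (Finsupp.single a j + Finsupp.single b 1) c) =
      monomial (Finsupp.single a (j + 1)) c := by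
  have hC : D (C c) = 0 := D.map_algebraMap c
  rw [monomial_add_single, ← C_mul_X_pow_eq_monomial, ← C_mul_X_pow_eq_monomial, pow_one,
    D.leibniz, D.leibniz, D.leibniz_pow, ha, hb, hC]
  simp only [smul_eq_mul]
  ring

abbrev Λ (n d : ℕ) := {k : Fin (n + 1) → ℕ // ∑ t, k t = d}

namespace Λ

variable {n d e : ℕ}

theorem ext_of_forall_ne_zero {k k' : Λ n d} (h : ∀ t ≠ 0, k.1 t = k'.1 t) : k = k' := by
  have hk := k.2
  have hk' := k'.2
  rw [Fin.sum_univ_succ] at hk hk'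
  have htail : ∑ i : Fin n, k.1 i.succ = ∑ i : Fin n, k'.1 i.succ :=
    Finset.sum_congr rfl fun i _ => h _ (Fin.succ_ne_zero i)
  apply Subtype.ext
  funext t
  rcases eq_or_ne t 0 with rfl | ht
  · omega
  · exact h t ht

def highest (n e : ℕ) : Λ n (e + 1) := ⟨Pi.single 0 (e + 1), by simp⟩

def subHighest (n e : ℕ) : Λ n (e + 1) :=
  ⟨Pi.single 0 e + Pi.single 1 1, by simp [Finset.sum_add_distrib]⟩

@[simp] theorem highest_val : (highest n e).1 = Pi.single 0 (e + 1) := rfl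

@[simp] theorem subHighest_val : (subHighest n e).1 = Pi.single 0 e + Pi.single 1 1 := rfl

theorem highest_ne_subHighest [NeZero n] : highest n e ≠ subHighest n e := fun h => by
  simpa [Fin.zero_ne_one'.symm] using congrFun (congrArg Subtype.val h) 1

theorem eq_highest_or_eq_subHighest {k : Λ n (e + 1)} (h1 : k.1 1 ≤ 1)
    (hrest : ∀ t ≠ 0, t ≠ 1 → k.1 t = 0) : k = highest n e ∨ k = subHighest n e := by
  rcases Nat.le_one_iff_eq_zero_or_eq_one.mp h1 with h | h
  · left
    refine ext_of_forall_ne_zero fun t ht => ?_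
    rcases eq_or_ne t 1 with rfl | ht1
    · simp [h, ht]
    · simp [hrest t ht ht1, ht]
  · right
    refine ext_of_forall_ne_zero fun t ht => ?_
    rcases eq_or_ne t 1 with rfl | ht1
    · simp [h, ht]
    · simp [hrest t ht ht1, ht, ht1]

theorem eq_single_highest_add_single_subHighest [NeZero n] {μ : Λ n (e + 1) →₀ ℕ}
    (h1 : Finsupp.weight Subtype.val μ 1 = 1)
    (hrest : ∀ t ≠ 0, t ≠ 1 → Finsupp.weight Subtype.val μ t = 0) :
    μ = Finsupp.single (highest n e) (μ (highest n e)) + Finsupp.single (subHighest n e) 1 := by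
  have hsupp : μ.support ⊆ {highest n e, subHighest n e} := by
    intro k hk
    have hle := Finsupp.le_weight_of_ne_zero' Subtype.val (Finsupp.mem_support_iff.mp hk)
    have := eq_highest_or_eq_subHighest (h1 ▸ hle 1)
      fun t ht ht1 => Nat.eq_zero_of_le_zero (hrest t ht ht1 ▸ hle t)
    simpa using this
  have hμ := Finsupp.eq_single_add_single_of_support_subset highest_ne_subHighest hsupp
  have hsub : μ (subHighest n e) = 1 := by
    have := congrFun (congrArg (Finsupp.weight Subtype.val) hμ) 1
    simpa [Finsupp.weight_single, h1, Fin.zero_ne_one'.symm] using this.symm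
  rwa [hsub] at hμ

theorem weight_single_highest_add_single_subHighest_apply_zero [NeZero n] (j : ℕ) :
    Finsupp.weight (Subtype.val : Λ n (e + 1) → Fin (n + 1) → ℕ)
      (Finsupp.single (highest n e) j + Finsupp.single (subHighest n e) 1) 0 = j * (e + 1) + e := by
  simp [Finsupp.weight_single]

theorem eq_of_weight_val_eq [NeZero n] {μ ν : Λ n (e + 1) →₀ ℕ}
    (h1 : Finsupp.weight Subtype.val μ 1 = 1)
    (hrest : ∀ t ≠ 0, t ≠ 1 → Finsupp.weight Subtype.val μ t = 0)
    (h : Finsupp.weight Subtype.val μ = Finsupp.weight Subtype.val ν) : μ = ν := by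
  have hμ := eq_single_highest_add_single_subHighest h1 hrest
  have hν := eq_single_highest_add_single_subHighest (h ▸ h1) (h ▸ hrest)
  have h0 := congrFun h 0
  rw [hμ, hν, weight_single_highest_add_single_subHighest_apply_zero,
    weight_single_highest_add_single_subHighest_apply_zero] at h0
  rw [hμ, hν, Nat.eq_of_mul_eq_mul_right e.succ_pos (Nat.add_right_cancel h0)]

theorem weight_val_eq_zero (μ : Λ n 0 →₀ ℕ) : Finsupp.weight Subtype.val μ = 0 := by
  have hval : (Subtype.val : Λ n 0 → Fin (n + 1) → ℕ) = 0 :=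
    funext fun k => funext fun t => Finset.sum_eq_zero_iff.mp k.2 t (Finset.mem_univ t)
  simp [hval, Finsupp.weight_apply]

theorem highest_val_eq_ite_subHighest [NeZero n] : (highest n e).1 = fun t =>
    if t = 0 then (subHighest n e).1 0 + 1
    else if t = 1 then (subHighest n e).1 1 - 1 else (subHighest n e).1 t := by
  funext t
  rcases eq_or_ne t 0 with rfl | h0
  · simp
  rcases eq_or_ne t 1 with rfl | h1
  · simp
  · simp [h0, h1]

end Λ

theorem weight_killed_by_E12_is_zero_general (n d m : ℕ) (hn : 2 ≤ n)
    (E₁₂ : Derivation ℂ (MvPolynomial {k : Fin (n + 1) → ℕ // ∑ t, k t = d} ℂ)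
      (MvPolynomial {k : Fin (n + 1) → ℕ // ∑ t, k t = d} ℂ))
    (hE₀ : ∀ k : {k : Fin (n + 1) → ℕ // ∑ t, k t = d},
      k.1 1 = 0 → E₁₂ (X k) = 0)
    (hE₁ : ∀ k k' : {k : Fin (n + 1) → ℕ // ∑ t, k t = d},
      1 ≤ k.1 1 →
      k'.1 = (fun t : Fin (n + 1) =>
        if t = 0 then k.1 0 + 1 else if t = 1 then k.1 1 - 1 else k.1 t) →
      E₁₂ (X k) = (k.1 1 : ℂ) • X k')
    (p : MvPolynomial {k : Fin (n + 1) → ℕ // ∑ t, k t = d} ℂ)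
    (hw : ∀ μ ∈ p.support,
      (fun t : Fin (n + 1) => μ.sum fun k e => e * k.1 t)
        = (fun t : Fin (n + 1) =>
            if t = 0 then m * d - 1 else if t = 1 then 1 else 0))
    (hEp : E₁₂ p = 0) :
    p = 0 := by
  have : NeZero n := ⟨by omega⟩
  have hwt : ∀ μ ∈ p.support, Finsupp.weight Subtype.val μ =
      fun t : Fin (n + 1) => if t = 0 then m * d - 1 else if t = 1 then 1 else 0 :=
    fun μ hμ => by
      rw [← hw μ hμ]
      ext t
      simp only [Finsupp.weight_apply, Finsupp.sum, Finset.sum_apply, Pi.smul_apply, smul_eq_mul]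
  by_contra hp
  obtain ⟨ν, hν⟩ := support_nonempty.mpr hp
  obtain ⟨e, rfl⟩ : ∃ e, d = e + 1 := Nat.exists_eq_succ_of_ne_zero fun hd => by
    subst hd
    simpa [Λ.weight_val_eq_zero] using congrFun (hwt ν hν) 1
  have h1 : ∀ μ ∈ p.support, Finsupp.weight Subtype.val μ 1 = 1 := fun μ hμ => by
    simp [hwt μ hμ]
  have hrest : ∀ μ ∈ p.support, ∀ t ≠ 0, t ≠ 1 → Finsupp.weight Subtype.val μ t = 0 :=
    fun μ hμ t h0 h1 => by simp [hwt μ hμ, h0, h1]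
  have hmono : p = monomial ν (coeff ν p) := eq_monomial_of_support_subset_singleton fun μ hμ =>
    Λ.eq_of_weight_val_eq (h1 μ hμ) (hrest μ hμ) ((hwt μ hμ).trans (hwt ν hν).symm)
  have hEa : E₁₂ (X (Λ.highest n e)) = 0 := hE₀ _ (by simp)
  have hEb : E₁₂ (X (Λ.subHighest n e)) = X (Λ.highest n e) := by
    simpa using hE₁ _ _ (by simp) Λ.highest_val_eq_ite_subHighest
  have hc := mem_support_iff.mp hν
  generalize coeff ν p = c at hmono hc
  rw [hmono, Λ.eq_single_highest_add_single_subHighest (h1 ν hν) (hrest ν hν),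
    E₁₂.apply_monomial_single_add_single hEa hEb, monomial_eq_zero] at hEp
  exact hc hEp

/-- Let `R = ℂ[y_k : k ∈ Λ]` with `Λ = {k ∈ ℕ^{n+1} : k₁+⋯+k_{n+1} = d}`, and let
`E₁₂` be the derivation of `R` with `E₁₂(y_k) = k₂·y_{k+e₁-e₂}` if `k₂ ≥ 1` and
`E₁₂(y_k) = 0` if `k₂ = 0`. If `p` is homogeneous of total degree `m`, every monomial
in its support has weight `(md-1, 1, 0, …, 0)`, and `E₁₂(p) = 0`, then `p = 0`:
the representation of highest weight `(md-2)λ₁ + λ₂` does not occur in `SᵐV_d`. -/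
theorem weight_killed_by_E12_is_zero (n d m : ℕ) (hn : 2 ≤ n) (hd : 2 ≤ d) (hm : 2 ≤ m)
    (E₁₂ : Derivation ℂ (MvPolynomial {k : Fin (n + 1) → ℕ // ∑ t, k t = d} ℂ)
      (MvPolynomial {k : Fin (n + 1) → ℕ // ∑ t, k t = d} ℂ))
    (hE₀ : ∀ k : {k : Fin (n + 1) → ℕ // ∑ t, k t = d},
      k.1 1 = 0 → E₁₂ (X k) = 0)
    (hE₁ : ∀ k k' : {k : Fin (n + 1) → ℕ // ∑ t, k t = d},
      1 ≤ k.1 1 →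
      k'.1 = (fun t : Fin (n + 1) =>
        if t = 0 then k.1 0 + 1 else if t = 1 then k.1 1 - 1 else k.1 t) →
      E₁₂ (X k) = (k.1 1 : ℂ) • X k')
    (p : MvPolynomial {k : Fin (n + 1) → ℕ // ∑ t, k t = d} ℂ)
    (hp : p.IsHomogeneous m)
    (hw : ∀ μ ∈ p.support,
      (fun t : Fin (n + 1) => μ.sum fun k e => e * k.1 t)
        = (fun t : Fin (n + 1) =>
            if t = 0 then m * d - 1 else if t = 1 then 1 else 0))
    (hEp : E₁₂ p = 0) :
    p = 0 :=
  weight_killed_by_E12_is_zero_general n d m hn E₁₂ hE₀ hE₁ p hw hEp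
end

section
/- There exist nonzero scalars λ_1, …, λ_{md−1} ∈ ℂ such that, with D = diag(λ_1,…,λ_{md−1}), the matrix identity Φ(ν(s,t)) · D · Θ(s,t) = 0 holds for all (s,t) ∈ ℂ²; moreover, for every (s,t) ≠ (0,0) the d−1 columns of D·Θ(s,t) form a basis of the kernel of Φ(ν(s,t)) : ℂ^{md−1} → ℂ^{E+1}. (This is the concrete form of the isomorphism between the restriction of the kernel bundle W_{m,d} to the rational normal curve, pulled back to ℙ¹, and V_{d−2} ⊗ O_{ℙ¹}((1−m)d).) -/
/-!
The coefficients have the closed form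
`c_{i,j} = (j-1)! (C(d-1, j+1-i) C(E-1, i-2) - C(d-1, j-i) C(E-1, i-1))` (`phiCoeff`, binomials
vanishing at negative lower index): it satisfies the recurrence by the absorption identity
`(n - k) C(n,k) = (k+1) C(n,k+1)`.

Take `λ_j = (md-1-j)!`. All terms of the entry `(i, l)` of `Φ(ν(s,t)) D Θ(s,t)` carry the same
monomial in `s, t`. Writing `(j-1)! (md-1-j)! C(d-1, j-1-p)` as `(d-1)!` times a product of
falling factorials in `j` of degrees `p` and `E-1-p`, its coefficient becomes a combination of
sums `Σ_k (-1)^k C(E,k) P(k)` with `deg P < E`: `E`-th forward differences, hence `0`.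

For `(s,t) ≠ 0`, square submatrices of `Φ(ν(s,t))` of size `E` and of `D Θ(s,t)` of size `d-1`
are triangular, with diagonal entries nonzero multiples of `s^d`, `s^E` (if `t = 0`) or of `t^d`,
`t^E`. So `rank Φ ≥ E`, and the `d-1` independent columns of `D Θ` span the kernel, whose
dimension is `md-1-rank Φ ≤ d-1`.
-/

open Finset Matrix

/-- The degree-`d` Veronese parametrization
`ν(s,t) = (s^d, s^{d-1}t, …, t^d) ∈ ℂ^{d+1}`. -/
noncomputable def nu (d : ℕ) (s t : ℂ) : Fin (d + 1) → ℂ :=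
  fun k => s ^ (d - k.1) * t ^ k.1

/-- The `(md-1) × (d-1)` matrix `Θ(s,t)` with (1-based) entries
`(-1)^{i-ℓ}·C(E,i-ℓ)·s^{i-ℓ}·t^{E-(i-ℓ)}` for `0 ≤ i-ℓ ≤ E` (where `E = (m-1)d`),
and `0` otherwise. -/
noncomputable def Theta (d m : ℕ) (s t : ℂ) : Matrix (Fin (m * d - 1)) (Fin (d - 1)) ℂ :=
  fun i l =>
    if l.1 ≤ i.1 ∧ i.1 ≤ l.1 + (m - 1) * d then
      (-1 : ℂ) ^ (i.1 - l.1) * (((m - 1) * d).choose (i.1 - l.1) : ℂ)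
        * s ^ (i.1 - l.1) * t ^ ((m - 1) * d - (i.1 - l.1))
    else 0

open scoped Nat

namespace Matrix

variable {K ι m n : Type*} [Field K]

theorem det_ne_zero_of_isLowerTriangular [Fintype ι] [DecidableEq ι] [LinearOrder ι]
    {M : Matrix ι ι K} (hM : M.IsLowerTriangular) (hdiag : ∀ i, M i i ≠ 0) : M.det ≠ 0 := by
  rw [det_of_isLowerTriangular M hM]
  exact prod_ne_zero_iff.mpr fun i _ => hdiag i

theorem linearIndependent_cols_of_det_submatrix_ne_zero [Fintype ι] [DecidableEq ι]
    (A : Matrix m ι K) (r : ι → m) (h : (A.submatrix r id).det ≠ 0) :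
    LinearIndependent K Aᵀ := by
  refine LinearIndependent.of_comp (LinearMap.funLeft K K r) ?_
  rw [← det_transpose] at h
  exact linearIndependent_rows_of_det_ne_zero h

theorem card_le_rank_of_det_submatrix_ne_zero [Fintype n] [Fintype ι] [DecidableEq ι]
    (A : Matrix m n K) (r : ι → m) (c : ι → n) (h : (A.submatrix r c).det ≠ 0) :
    Fintype.card ι ≤ A.rank := by
  rw [← rank_of_isUnit _ ((isUnit_iff_isUnit_det _).mpr h.isUnit)]
  exact rank_submatrix_le A r c

theorem ker_mulVecLin_eq_span_cols [Fintype n] [Fintype ι] (A : Matrix m n K)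
    (B : Matrix n ι K) (hAB : A * B = 0) (hB : LinearIndependent K Bᵀ)
    (hrank : Fintype.card n ≤ A.rank + Fintype.card ι) :
    LinearMap.ker A.mulVecLin = Submodule.span K (Set.range Bᵀ) := by
  have hle : Submodule.span K (Set.range Bᵀ) ≤ LinearMap.ker A.mulVecLin := by
    rw [Submodule.span_le]
    rintro _ ⟨l, rfl⟩
    have : A *ᵥ Bᵀ l = (A * B)ᵀ l := by
      ext i; simp [mul_apply, mulVec, dotProduct]
    rw [SetLike.mem_coe, LinearMap.mem_ker, mulVecLin_apply, this, hAB]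
    rfl
  refine (Submodule.eq_of_le_of_finrank_le hle ?_).symm
  have := LinearMap.finrank_range_add_finrank_ker A.mulVecLin
  rw [Module.finrank_fintype_fun_eq_card] at this
  rw [finrank_span_eq_card hB]
  unfold rank at hrank
  omega

end Matrix

def intChoose (n : ℕ) (k : ℤ) : ℤ := if 0 ≤ k then n.choose k.toNat else 0

theorem intChoose_of_neg (n : ℕ) {k : ℤ} (h : k < 0) : intChoose n k = 0 := by
  simp [intChoose, not_le.mpr h]

@[simp]
theorem intChoose_natCast (n k : ℕ) : intChoose n k = n.choose k := by
  simp [intChoose]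

@[simp]
theorem intChoose_zero (n : ℕ) : intChoose n 0 = 1 := by
  simp [intChoose]

theorem intChoose_of_lt (n : ℕ) {k : ℤ} (h : (n : ℤ) < k) : intChoose n k = 0 := by
  lift k to ℕ using by omega
  simp [Nat.choose_eq_zero_of_lt (by exact_mod_cast h : n < k)]

theorem sub_mul_intChoose (n : ℕ) (k : ℤ) :
    ((n : ℤ) - k) * intChoose n k = (k + 1) * intChoose n (k + 1) := by
  by_cases hk : k < 0
  · rw [intChoose_of_neg n hk, mul_zero]
    obtain rfl | hk' : k = -1 ∨ k + 1 < 0 := by omega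
    · simp
    · rw [intChoose_of_neg n hk', mul_zero]
  lift k to ℕ using by omega
  rw [show (k : ℤ) + 1 = ((k + 1 : ℕ) : ℤ) by push_cast; ring, intChoose_natCast,
    intChoose_natCast]
  rcases le_or_gt k n with hkn | hkn
  · have := Nat.choose_succ_right_eq n k
    zify [hkn] at this
    push_cast
    linear_combination -this
  · rw [Nat.choose_eq_zero_of_lt hkn, Nat.choose_eq_zero_of_lt (by omega)]; simp

theorem factorial_mul_factorial_mul_intChoose {a b p q D : ℕ} (h : a + b = p + q + D) :
    (a ! * b ! : ℤ) * intChoose D ((a : ℤ) - p)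
      = D ! * a.descFactorial p * b.descFactorial q := by
  rcases lt_or_ge a p with hap | hap
  · rw [intChoose_of_neg D (by omega), Nat.descFactorial_eq_zero_iff_lt.mpr hap]; simp
  rcases lt_or_ge b q with hbq | hbq
  · rw [intChoose_of_lt D (by omega), Nat.descFactorial_eq_zero_iff_lt.mpr hbq]; simp
  rw [show (a : ℤ) - p = ((a - p : ℕ) : ℤ) by omega, intChoose_natCast]
  have hD : D - (a - p) = b - q := by omega
  have key := Nat.choose_mul_factorial_mul_factorial (show a - p ≤ D by omega)
  rw [hD] at key
  rw [← Nat.factorial_mul_descFactorial hap, ← Nat.factorial_mul_descFactorial hbq, ← key]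
  push_cast
  ring

def phiCoeff (d E i j : ℕ) : ℤ :=
  (j - 1)! * (intChoose (d - 1) (j + 1 - i) * intChoose (E - 1) (i - 2)
    - intChoose (d - 1) (j - i) * intChoose (E - 1) (i - 1))

theorem phiCoeff_zero_left (d E j : ℕ) : phiCoeff d E 0 j = 0 := by
  simp [phiCoeff, intChoose_of_neg]

theorem phiCoeff_succ_succ {d E : ℕ} (hd : 1 ≤ d) (hE : 1 ≤ E) (i j : ℕ) (hi : 1 ≤ i) :
    phiCoeff d E i (j + 2) = ((d : ℤ) + i - j - 2) * phiCoeff d E i (j + 1)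
      + ((E : ℤ) - i + 2) * phiCoeff d E (i - 1) (j + 1) := by
  have hA (k : ℤ) := sub_mul_intChoose (d - 1) k
  have hB (k : ℤ) := sub_mul_intChoose (E - 1) k
  push_cast [Nat.cast_sub hd, Nat.cast_sub hE] at hA hB
  have r1 := hA ((j : ℤ) + 1 - i)
  have r2 := hA ((j : ℤ) + 1 - i + 1)
  have r3 := hB ((i : ℤ) - 3)
  have r4 := hB ((i : ℤ) - 2)
  rw [show (i : ℤ) - 3 + 1 = i - 2 by ring] at r3
  rw [show (i : ℤ) - 2 + 1 = i - 1 by ring] at r4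
  simp only [phiCoeff, Nat.add_sub_cancel]
  push_cast [Nat.cast_sub hi, Nat.factorial_succ]
  rw [show (j : ℤ) + 2 + 1 - i = j + 1 - i + 1 + 1 by ring,
    show (j : ℤ) + 2 - i = j + 1 - i + 1 by ring,
    show (j : ℤ) + 1 + 1 - i = j + 1 - i + 1 by ring,
    show (j : ℤ) + 1 + 1 - (i - 1) = j + 1 - i + 1 + 1 by ring,
    show (j : ℤ) + 1 - (i - 1) = j + 1 - i + 1 by ring, show (i : ℤ) - 1 - 2 = i - 3 by ring,
    show (i : ℤ) - 1 - 1 = i - 2 by ring]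
  linear_combination (-(j ! : ℤ)) * (intChoose (E - 1) ((i : ℤ) - 2) * r2
    - intChoose (E - 1) ((i : ℤ) - 1) * r1 + intChoose (d - 1) ((j : ℤ) + 1 - i + 1 + 1) * r3
    - intChoose (d - 1) ((j : ℤ) + 1 - i + 1) * r4)

theorem coeff_succ_succ_of_rec {d E N : ℕ} {c : ℕ → ℕ → ℤ}
    (hzero : ∀ i j, 1 ≤ j → j ≤ N → (i = 0 ∨ j + 1 < i) → c i j = 0)
    (hrec1 : ∀ j, 2 ≤ j → j ≤ N → c 1 j = ((d : ℤ) - j + 1) * c 1 (j - 1))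
    (hrec2 : ∀ j, 2 ≤ j → j ≤ N → ∀ i, 2 ≤ i → i ≤ j →
      c i j = ((d : ℤ) - j + i) * c i (j - 1) + ((E : ℤ) - i + 2) * c (i - 1) (j - 1))
    (hrec3 : ∀ j, 2 ≤ j → j ≤ N → c (j + 1) j = ((E : ℤ) - j + 1) * c j (j - 1))
    (i j : ℕ) (hi : 1 ≤ i) (hj : j + 2 ≤ N) :
    c i (j + 2) = ((d : ℤ) + i - j - 2) * c i (j + 1)
      + ((E : ℤ) - i + 2) * c (i - 1) (j + 1) := by
  obtain rfl | hi : i = 1 ∨ 2 ≤ i := by omega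
  · rw [hrec1 (j + 2) (by omega) hj, hzero 0 (j + 1) (by omega) (by omega) (.inl rfl)]
    push_cast
    ring
  obtain hij | rfl | hij : i ≤ j + 2 ∨ i = j + 3 ∨ j + 3 < i := by omega
  · rw [hrec2 (j + 2) (by omega) hj i hi hij]
    push_cast
    ring
  · rw [hrec3 (j + 2) (by omega) hj, hzero (j + 3) (j + 1) (by omega) (by omega) (.inr (by omega))]
    push_cast
    ring
  · rw [hzero i (j + 2) (by omega) hj (.inr (by omega)),
      hzero i (j + 1) (by omega) (by omega) (.inr (by omega)),
      hzero (i - 1) (j + 1) (by omega) (by omega) (.inr (by omega))]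
    ring

theorem eq_phiCoeff_of_rec {d E N : ℕ} (hd : 1 ≤ d) (hE : 1 ≤ E) {c : ℕ → ℕ → ℤ}
    (hzero : ∀ i j, 1 ≤ j → j ≤ N → (i = 0 ∨ j + 1 < i) → c i j = 0)
    (h11 : c 1 1 = -1) (h21 : c 2 1 = 1)
    (hrec : ∀ i j, 1 ≤ i → j + 2 ≤ N → c i (j + 2) = ((d : ℤ) + i - j - 2) * c i (j + 1)
      + ((E : ℤ) - i + 2) * c (i - 1) (j + 1)) :
    ∀ j, 1 ≤ j → j ≤ N → ∀ i, c i j = phiCoeff d E i j := by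
  intro j hj
  induction j, hj using Nat.le_induction with
  | base =>
    intro hN i
    match i with
    | 0 => rw [hzero 0 1 le_rfl hN (.inl rfl), phiCoeff_zero_left]
    | 1 => simp (disch := omega) [h11, phiCoeff, intChoose_of_neg]
    | 2 => simp (disch := omega) [h21, phiCoeff, intChoose_of_neg]
    | i + 3 =>
      rw [hzero (i + 3) 1 le_rfl hN (.inr (by omega))]
      simp (disch := omega) [phiCoeff, intChoose_of_neg]
  | succ j hj ih =>
    intro hN i
    obtain ⟨j, rfl⟩ := Nat.exists_eq_add_of_le' hj
    rcases Nat.eq_zero_or_pos i with rfl | hi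
    · rw [hzero 0 _ (by omega) hN (.inl rfl), phiCoeff_zero_left]
    rw [hrec i j hi hN, phiCoeff_succ_succ hd hE i j hi, ih (by omega) i, ih (by omega) (i - 1)]

open Polynomial in
theorem alternating_sum_eval_eq_zero {n : ℕ} {P : ℤ[X]} (hP : P.natDegree < n) :
    ∑ k ∈ range (n + 1), (-1 : ℤ) ^ k * n.choose k * P.eval (k : ℤ) = 0 := by
  have h := congrFun (Polynomial.fwdDiff_iter_eq_zero_of_degree_lt hP) 0
  rw [fwdDiff_iter_eq_sum_shift] at h
  calc _ = (-1) ^ n * ∑ k ∈ range (n + 1),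
        ((-1 : ℤ) ^ (n - k) * n.choose k) • P.eval (0 + k • 1) := by
        rw [mul_sum]
        refine sum_congr rfl fun k hk => ?_
        obtain ⟨j, rfl⟩ := Nat.exists_eq_add_of_le (mem_range_succ_iff.mp hk)
        simp only [Nat.add_sub_cancel_left, smul_eq_mul, zero_add, nsmul_one, pow_add]
        ring_nf
        simp
    _ = 0 := by rw [h, Pi.zero_apply, mul_zero]

open Polynomial in
theorem alternating_sum_descFactorial_mul_descFactorial {n p q : ℕ} (a M : ℕ) (hpq : p + q < n)
    (hM : n ≤ M) :
    ∑ k ∈ range (n + 1),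
      (-1 : ℤ) ^ k * n.choose k * ((a + k).descFactorial p * (M - k).descFactorial q) = 0 := by
  set P : ℤ[X] := (descPochhammer ℤ p).comp (X + C (a : ℤ)) *
    (descPochhammer ℤ q).comp (C (M : ℤ) - X)
  have hP : P.natDegree < n := by
    have hlin : (C (M : ℤ) - X).natDegree ≤ 1 := (natDegree_sub_le _ _).trans (by simp)
    refine (natDegree_mul_le.trans (add_le_add natDegree_comp_le natDegree_comp_le)).trans_lt ?_
    rw [descPochhammer_natDegree, descPochhammer_natDegree, natDegree_X_add_C]
    nlinarith
  rw [← alternating_sum_eval_eq_zero hP]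
  refine sum_congr rfl fun k hk => ?_
  have hk : k ≤ M := by have := mem_range.mp hk; omega
  simp only [P, eval_mul, eval_comp, eval_add, eval_sub, eval_X, eval_C]
  rw [show (k : ℤ) + a = ((a + k : ℕ) : ℤ) by push_cast; ring,
    show (M : ℤ) - k = ((M - k : ℕ) : ℤ) by omega, descPochhammer_eval_eq_descFactorial,
    descPochhammer_eval_eq_descFactorial]

theorem intChoose_mul_sum_factorial_mul_intChoose_alternating {d E l : ℕ} (hE : 1 ≤ E)
    (hl : l + 2 ≤ d) (p : ℤ) :
    intChoose (E - 1) p * ∑ k ∈ range (E + 1), ((l + k)! * (E + d - 2 - (l + k))! : ℤ)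
      * intChoose (d - 1) ((l : ℤ) + k - p) * ((-1) ^ k * E.choose k) = 0 := by
  rcases lt_or_ge p 0 with hp | hp
  · rw [intChoose_of_neg _ hp, zero_mul]
  rcases lt_or_ge ((E - 1 : ℕ) : ℤ) p with hp' | hp'
  · rw [intChoose_of_lt _ hp', zero_mul]
  lift p to ℕ using hp
  have hterm : ∀ k ∈ range (E + 1), ((l + k)! * (E + d - 2 - (l + k))! : ℤ)
      * intChoose (d - 1) ((l : ℤ) + k - p) * ((-1) ^ k * E.choose k)
      = (d - 1)! * ((-1) ^ k * E.choose k
        * ((l + k).descFactorial p * (E + d - 2 - l - k).descFactorial (E - 1 - p))) := by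
    intro k hk
    have hk := mem_range.mp hk
    have := factorial_mul_factorial_mul_intChoose (a := l + k) (b := E + d - 2 - (l + k))
      (p := p) (q := E - 1 - p) (D := d - 1) (by omega)
    rw [show E + d - 2 - l - k = E + d - 2 - (l + k) by omega]
    push_cast at this
    linear_combination ((-1) ^ k * E.choose k : ℤ) * this
  rw [sum_congr rfl hterm, ← mul_sum, alternating_sum_descFactorial_mul_descFactorial
    (n := E) (p := p) (q := E - 1 - p) l (E + d - 2 - l) (by omega) (by omega), mul_zero, mul_zero]

/-- The factor `C(E-1, p)` vanishes exactly for the `p` outside `[0, E-1]`, where the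
finite-difference argument does not apply. -/
theorem sum_phiCoeff_alternating {d E l : ℕ} (i : ℕ) (hE : 1 ≤ E) (hl : l + 2 ≤ d) :
    ∑ k ∈ range (E + 1), phiCoeff d E (i + 1) (l + k + 1)
      * ((E + d - 2 - (l + k))! * ((-1) ^ k * E.choose k)) = 0 := by
  have h := congrArg₂ (· - ·)
    (intChoose_mul_sum_factorial_mul_intChoose_alternating hE hl ((i : ℤ) - 1))
    (intChoose_mul_sum_factorial_mul_intChoose_alternating hE hl i)
  simp only [mul_sum, ← sum_sub_distrib, sub_zero] at h
  rw [← h]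
  refine sum_congr rfl fun k _ => ?_
  simp only [phiCoeff, Nat.add_sub_cancel]
  push_cast
  rw [show (l : ℤ) + k + 1 + 1 - (i + 1) = l + k - (i - 1) by ring,
    show (l : ℤ) + k + 1 - (i + 1) = l + k - i by ring, show (i : ℤ) + 1 - 2 = i - 1 by ring,
    show (i : ℤ) + 1 - 1 = i by ring]
  ring

theorem phiCoeff_eq_zero_of_not_band {d : ℕ} (hd : 1 ≤ d) (E : ℕ) {i j : ℕ}
    (h : ¬(i ≤ j + 1 ∧ j + 1 ≤ i + d)) : phiCoeff d E (i + 1) (j + 1) = 0 := by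
  rcases not_and_or.mp h with h | h
  · simp (disch := omega) [phiCoeff, intChoose_of_neg]
  · simp (disch := omega) [phiCoeff, intChoose_of_lt]

theorem phiCoeff_add_two_add_one_ne_zero (d : ℕ) {E k : ℕ} (hk : k < E) :
    phiCoeff d E (k + 2) (k + 1) ≠ 0 := by
  simp (disch := omega) only [phiCoeff, intChoose_of_neg]
  rw [show ((k + 1 : ℕ) : ℤ) + 1 - (k + 2 : ℕ) = 0 by push_cast; ring,
    show ((k + 2 : ℕ) : ℤ) - 2 = k by push_cast; ring]
  simp [Nat.factorial_ne_zero, Nat.choose_eq_zero_iff]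
  omega

theorem phiCoeff_add_one_add_ne_zero {d : ℕ} (hd : 1 ≤ d) {E k : ℕ} (hk : k < E) :
    phiCoeff d E (k + 1) (k + d) ≠ 0 := by
  simp (disch := omega) only [phiCoeff, intChoose_of_lt]
  rw [show ((k + d : ℕ) : ℤ) - (k + 1 : ℕ) = (d - 1 : ℕ) by omega,
    show ((k + 1 : ℕ) : ℤ) - 1 = k by push_cast; ring]
  simp [Nat.factorial_ne_zero, Nat.choose_eq_zero_iff]
  omega

theorem sub_one_mul_add_self {m : ℕ} (d : ℕ) (hm : 1 ≤ m) : (m - 1) * d + d = m * d := by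
  rw [← Nat.succ_mul, Nat.succ_eq_add_one, Nat.sub_add_cancel hm]

section

variable {d m : ℕ}

theorem Phi_congr {c c' : ℕ → ℕ → ℤ}
    (h : ∀ j, 1 ≤ j → j ≤ m * d - 1 → ∀ i, c i j = c' i j) :
    Phi d m c = Phi d m c' := by
  funext y i j
  simp only [Phi]
  split_ifs
  · rw [h _ (by omega) (by omega)]
  · rfl

theorem Phi_nu_apply {c : ℕ → ℕ → ℤ}
    (hc : ∀ i j, ¬(i ≤ j + 1 ∧ j + 1 ≤ i + d) → c (i + 1) (j + 1) = 0) (s t : ℂ)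
    (i : Fin ((m - 1) * d + 1)) (j : Fin (m * d - 1)) :
    Phi d m c (nu d s t) i j
      = c (i.1 + 1) (j.1 + 1) * s ^ (d + i.1 - (j.1 + 1)) * t ^ (j.1 + 1 - i.1) := by
  unfold Phi nu
  split_ifs with h
  · rw [show d - (j + 1 - i) = d + i - (j + 1) by omega, mul_assoc]
  · simp [hc _ _ h]

theorem Phi_nu_apply_mul_Theta_apply (hd : 1 ≤ d) (s t : ℂ) (i : Fin ((m - 1) * d + 1))
    (l : Fin (d - 1)) {k : ℕ} (hk : k ≤ (m - 1) * d) (h : l.1 + k < m * d - 1) :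
    Phi d m (phiCoeff d ((m - 1) * d)) (nu d s t) i ⟨l + k, h⟩ * Theta d m s t ⟨l + k, h⟩ l
      = (phiCoeff d ((m - 1) * d) (i + 1) (l + k + 1) * ((-1) ^ k * ((m - 1) * d).choose k) : ℤ)
        * (s ^ (d + i - 1 - l) * t ^ ((m - 1) * d + 1 + l - i)) := by
  rw [Phi_nu_apply (fun _ _ => phiCoeff_eq_zero_of_not_band hd _)]
  simp only [Theta, show l.1 ≤ l + k ∧ l + k ≤ l + (m - 1) * d by omega, and_self, if_true,
    Nat.add_sub_cancel_left]
  by_cases hband : i.1 ≤ l + k + 1 ∧ l + k + 1 ≤ i + d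
  · rw [show d + i - 1 - l = (d + i - (l + k + 1)) + k by omega,
      show (m - 1) * d + 1 + l - i = (l + k + 1 - i) + ((m - 1) * d - k) by omega]
    push_cast
    ring
  · rw [phiCoeff_eq_zero_of_not_band hd _ hband]
    simp

theorem Phi_nu_mul_diagonal_mul_Theta_eq_zero (hd : 1 ≤ d) (hm : 2 ≤ m) (s t : ℂ) :
    Phi d m (phiCoeff d ((m - 1) * d)) (nu d s t)
      * (diagonal (fun j : Fin (m * d - 1) => ((m * d - 2 - j : ℕ)! : ℂ)) * Theta d m s t)
      = 0 := by
  have hmd := sub_one_mul_add_self d (by omega : 1 ≤ m)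
  have hE : 1 ≤ (m - 1) * d := Nat.mul_pos (by omega) (by omega)
  ext i l
  rw [mul_apply]
  simp only [diagonal_mul, Matrix.zero_apply, sum_fin_eq_sum_range]
  rw [← sum_subset (s₁ := Ico l.1 (l + ((m - 1) * d + 1)))
    (fun j hj => mem_range.mpr (by rw [mem_Ico] at hj; omega))]
  · rw [sum_Ico_eq_sum_range, Nat.add_sub_cancel_left]
    calc _ = ∑ k ∈ range ((m - 1) * d + 1), ((phiCoeff d ((m - 1) * d) (i + 1) (l + k + 1)
          * (((m - 1) * d + d - 2 - (l + k))! * ((-1) ^ k * ((m - 1) * d).choose k)) : ℤ) : ℂ)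
          * (s ^ (d + i - 1 - l) * t ^ ((m - 1) * d + 1 + l - i)) := by
          refine sum_congr rfl fun k hk => ?_
          have hk := mem_range.mp hk
          rw [dif_pos (by omega), mul_left_comm,
            Phi_nu_apply_mul_Theta_apply hd s t i l (by omega),
            show m * d - 2 - (l + k) = (m - 1) * d + d - 2 - (l + k) by omega]
          push_cast
          ring
      _ = 0 := by rw [← sum_mul, ← Int.cast_sum, sum_phiCoeff_alternating _ hE (by omega)]; simp
  · intro j _ hj
    split_ifs with hjN
    · rw [mem_Ico, not_and, not_lt] at hj
      have hΘ : Theta d m s t ⟨j, hjN⟩ l = 0 :=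
        if_neg (by show ¬(l.1 ≤ j ∧ j ≤ l.1 + (m - 1) * d); omega)
      rw [hΘ]
      simp
    · rfl

theorem linearIndependent_transpose_diagonal_mul_Theta (hm : 1 ≤ m)
    {lam : Fin (m * d - 1) → ℂ} (hlam : ∀ j, lam j ≠ 0) {s t : ℂ}
    (hst : ¬(s = 0 ∧ t = 0)) :
    LinearIndependent ℂ (diagonal lam * Theta d m s t)ᵀ := by
  have hmd := sub_one_mul_add_self d hm
  by_cases ht : t = 0
  · have hs : s ≠ 0 := fun hs => hst ⟨hs, ht⟩
    refine linearIndependent_cols_of_det_submatrix_ne_zero _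
      (fun l => ⟨l + (m - 1) * d, by omega⟩) (det_ne_zero_of_isLowerTriangular ?_ fun l => ?_)
    · intro l l' hll'
      rw [OrderDual.toDual_lt_toDual, Fin.lt_def] at hll'
      simp only [submatrix_apply, diagonal_mul, Theta, id]
      split_ifs
      · rw [ht, zero_pow (by omega), mul_zero, mul_zero]
      · rw [mul_zero]
    · simp only [submatrix_apply, diagonal_mul, Theta, id]
      rw [if_pos (by omega)]
      simp [hlam, hs]
  · refine linearIndependent_cols_of_det_submatrix_ne_zero _
      (fun l => ⟨l, by omega⟩) (det_ne_zero_of_isLowerTriangular ?_ fun l => ?_)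
    · intro l l' hll'
      rw [OrderDual.toDual_lt_toDual, Fin.lt_def] at hll'
      simp only [submatrix_apply, diagonal_mul, Theta, id]
      rw [if_neg (by omega), mul_zero]
    · simp only [submatrix_apply, diagonal_mul, Theta, id]
      rw [if_pos (by omega)]
      simp [hlam, ht]

theorem le_rank_Phi_nu (hd : 1 ≤ d) (hm : 2 ≤ m) {s t : ℂ} (hst : ¬(s = 0 ∧ t = 0)) :
    (m - 1) * d ≤ (Phi d m (phiCoeff d ((m - 1) * d)) (nu d s t)).rank := by
  have hmd := sub_one_mul_add_self d (by omega : 1 ≤ m)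
  have hband := fun i j => phiCoeff_eq_zero_of_not_band (i := i) (j := j) hd ((m - 1) * d)
  by_cases ht : t = 0
  · have hs : s ≠ 0 := fun hs => hst ⟨hs, ht⟩
    refine le_of_eq_of_le (Fintype.card_fin _).symm (card_le_rank_of_det_submatrix_ne_zero _
      (fun k : Fin ((m - 1) * d) => ⟨k + 1, by omega⟩) (fun k => ⟨k, by omega⟩)
      (det_ne_zero_of_isLowerTriangular (fun k k' hkk' => ?_) fun k => ?_))
    · rw [OrderDual.toDual_lt_toDual, Fin.lt_def] at hkk'
      simp only [submatrix_apply, Phi_nu_apply hband, ht]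
      rw [zero_pow (by omega), mul_zero]
    · simp only [submatrix_apply, Phi_nu_apply hband]
      simp [phiCoeff_add_two_add_one_ne_zero _ k.2, hs]
  · refine le_of_eq_of_le (Fintype.card_fin _).symm (card_le_rank_of_det_submatrix_ne_zero _
      (fun k : Fin ((m - 1) * d) => ⟨k, by omega⟩) (fun k => ⟨k + d - 1, by omega⟩)
      (det_ne_zero_of_isLowerTriangular (fun k k' hkk' => ?_) fun k => ?_))
    · rw [OrderDual.toDual_lt_toDual, Fin.lt_def] at hkk'
      simp only [submatrix_apply, Phi_nu_apply hband]
      rw [hband _ _ (by omega)]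
      simp
    · simp only [submatrix_apply, Phi_nu_apply hband]
      rw [show k.1 + d - 1 + 1 = k + d by omega]
      simp [phiCoeff_add_one_add_ne_zero hd k.2, ht, show d + k.1 - (k.1 + d) = 0 by omega]

end

/-- There are nonzero scalars `λ₁, …, λ_{md-1}` such that, with `D = diag(λ)`,
`Φ(ν(s,t)) · D · Θ(s,t) = 0` for all `(s,t)`, and for `(s,t) ≠ (0,0)` the `d-1`
columns of `D·Θ(s,t)` form a basis of the kernel of `Φ(ν(s,t)) : ℂ^{md-1} → ℂ^{E+1}`. -/
theorem kernel_basis_via_Theta (d m : ℕ) (hd : 2 ≤ d) (hm : 2 ≤ m)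
    (c : ℕ → ℕ → ℤ)
    (hzero : ∀ i j, 1 ≤ j → j ≤ m * d - 1 → (i = 0 ∨ j + 1 < i) → c i j = 0)
    (h11 : c 1 1 = -1) (h21 : c 2 1 = 1)
    (hrec1 : ∀ j, 2 ≤ j → j ≤ m * d - 1 →
      c 1 j = ((d : ℤ) - j + 1) * c 1 (j - 1))
    (hrec2 : ∀ j, 2 ≤ j → j ≤ m * d - 1 → ∀ i, 2 ≤ i → i ≤ j →
      c i j = ((d : ℤ) - j + i) * c i (j - 1)
        + ((((m - 1) * d : ℕ) : ℤ) - i + 2) * c (i - 1) (j - 1))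
    (hrec3 : ∀ j, 2 ≤ j → j ≤ m * d - 1 →
      c (j + 1) j = ((((m - 1) * d : ℕ) : ℤ) - j + 1) * c j (j - 1)) :
    ∃ lam : Fin (m * d - 1) → ℂ, (∀ j, lam j ≠ 0) ∧
      ∀ s t : ℂ,
        Phi d m c (nu d s t) * (Matrix.diagonal lam * Theta d m s t) = 0 ∧
        (¬(s = 0 ∧ t = 0) →
          LinearIndependent ℂ
            (fun l : Fin (d - 1) => (Matrix.diagonal lam * Theta d m s t)ᵀ l) ∧
          LinearMap.ker (Phi d m c (nu d s t)).mulVecLin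
            = Submodule.span ℂ
                (Set.range fun l : Fin (d - 1) =>
                  (Matrix.diagonal lam * Theta d m s t)ᵀ l)) := by
  have hd1 : 1 ≤ d := by omega
  have hE : 1 ≤ (m - 1) * d := Nat.mul_pos (by omega) (by omega)
  have hmd := sub_one_mul_add_self d (by omega : 1 ≤ m)
  have hc : Phi d m c = Phi d m (phiCoeff d ((m - 1) * d)) :=
    Phi_congr (eq_phiCoeff_of_rec hd1 hE hzero h11 h21
      (coeff_succ_succ_of_rec hzero hrec1 hrec2 hrec3))
  have hlam (j : Fin (m * d - 1)) : ((m * d - 2 - j : ℕ)! : ℂ) ≠ 0 :=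
    Nat.cast_ne_zero.mpr (Nat.factorial_ne_zero _)
  refine ⟨fun j => ((m * d - 2 - j : ℕ)! : ℂ), hlam, fun s t => ?_⟩
  rw [hc]
  have hprod := Phi_nu_mul_diagonal_mul_Theta_eq_zero hd1 hm s t
  refine ⟨hprod, fun hst => ?_⟩
  have hind := linearIndependent_transpose_diagonal_mul_Theta (by omega) hlam hst
  refine ⟨hind, ker_mulVecLin_eq_span_cols _ _ hprod hind ?_⟩
  have := le_rank_Phi_nu hd1 hm hst
  simp only [Fintype.card_fin]
  omega
end
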